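/- arXiv:2604.09795 — 7 statements merged into one kernel-verified Lean document; each statement's English description precedes it below -/
import Mathlib

section
/- Let μ₂ > 0 and let α₂ : ℝ → ℝ be a differentiable function satisfying the ODE α₂'(t) = μ₂ · cos(α₂(t)) for all t ≥ 0, with initial condition α₂(0) ∈ (-π/2, π/2). Then for all t ≥ 0, sin(α₂(t)) = tanh(μ₂ t + artanh(sin(α₂(0)))). -/
open Real Set

/-- The inverse hyperbolic tangent. -/
noncomputable def artanh (x : ℝ) : ℝ := (1 / 2) * Real.log ((1 + x) / (1 - x))

/-!
Both `sin ∘ α₂` and `t ↦ tanh (μ₂ t + c)` solve the Riccati equation `y' = μ₂ (1 - y²)` and take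
values in `[-1, 1]`, where the right-hand side is `2|μ₂|`-Lipschitz; with `c = artanh (sin (α₂ 0))`
they agree at `0`, so they coincide by uniqueness of solutions.
-/

theorem Real.hasDerivAt_tanh (x : ℝ) : HasDerivAt tanh (1 - tanh x ^ 2) x := by
  have h := (hasDerivAt_sinh x).div (hasDerivAt_cosh x) (cosh_pos x).ne'
  rw [show sinh / cosh = tanh from funext fun y => (tanh_eq_sinh_div_cosh y).symm] at h
  refine h.congr_deriv ?_
  rw [tanh_eq_sinh_div_cosh]
  field_simp

theorem hasDerivAt_tanh_mul_add (μ c t : ℝ) :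
    HasDerivAt (fun s => tanh (μ * s + c)) (μ * (1 - tanh (μ * t + c) ^ 2)) t := by
  have hlin : HasDerivAt (fun s : ℝ => μ * s + c) μ t := by
    simpa using ((hasDerivAt_id t).const_mul μ).add_const c
  exact ((hasDerivAt_tanh (μ * t + c)).comp t hlin).congr_deriv (mul_comm _ _)

theorem hasDerivAt_sin_comp_of_hasDerivAt_mul_cos {α : ℝ → ℝ} {μ t : ℝ}
    (h : HasDerivAt α (μ * cos (α t)) t) :
    HasDerivAt (fun s => sin (α s)) (μ * (1 - sin (α t) ^ 2)) t := by
  refine ((hasDerivAt_sin (α t)).comp t h).congr_deriv ?_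
  rw [← cos_sq']
  ring

theorem lipschitzOnWith_mul_one_sub_sq (μ : ℝ) :
    LipschitzOnWith (2 * ‖μ‖₊) (fun x : ℝ => μ * (1 - x ^ 2)) (Icc (-1) 1) := by
  refine LipschitzOnWith.of_dist_le_mul fun x hx y hy => ?_
  have hxy : |x + y| ≤ 2 := by
    rw [abs_le]; constructor <;> linarith [hx.1, hx.2, hy.1, hy.2]
  simp only [dist_eq_norm, Real.norm_eq_abs, NNReal.coe_mul, NNReal.coe_ofNat, coe_nnnorm]
  calc |μ * (1 - x ^ 2) - μ * (1 - y ^ 2)| = |μ| * |x + y| * |x - y| := by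
        rw [← abs_mul, ← abs_mul, ← abs_neg]; congr 1; ring
    _ ≤ |μ| * 2 * |x - y| := by gcongr
    _ = 2 * |μ| * |x - y| := by ring

theorem eq_tanh_of_hasDerivAt_mul_one_sub_sq {y : ℝ → ℝ} {μ c : ℝ}
    (hy : ∀ t, 0 ≤ t → HasDerivAt y (μ * (1 - y t ^ 2)) t)
    (hbound : ∀ t, 0 ≤ t → y t ∈ Icc (-1) 1) (h0 : y 0 = tanh c) :
    ∀ t, 0 ≤ t → y t = tanh (μ * t + c) := by
  intro t ht
  refine ODE_solution_unique_of_mem_Icc_right (v := fun _ x => μ * (1 - x ^ 2))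
    (s := fun _ => Icc (-1) 1) (fun _ _ => lipschitzOnWith_mul_one_sub_sq μ)
    (fun s hs => (hy s hs.1).continuousAt.continuousWithinAt)
    (fun s hs => (hy s hs.1).hasDerivWithinAt) (fun s hs => hbound s hs.1)
    (fun s _ => (hasDerivAt_tanh_mul_add μ c s).continuousAt.continuousWithinAt)
    (fun s _ => (hasDerivAt_tanh_mul_add μ c s).hasDerivWithinAt)
    (fun s _ => ⟨(neg_one_lt_tanh _).le, (tanh_lt_one _).le⟩)
    (by simpa using h0) ⟨ht, le_rfl⟩

theorem sin_mem_Ioo_of_mem_Ioo {x : ℝ} (hx : x ∈ Ioo (-(π / 2)) (π / 2)) :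
    sin x ∈ Ioo (-1) 1 := by
  have hcos := cos_pos_of_mem_Ioo hx
  have : sin x ^ 2 < 1 := by nlinarith [sin_sq_add_cos_sq x]
  exact abs_lt.mp (sq_lt_one_iff_abs_lt_one _ |>.mp this)

theorem artanh_eq_real_artanh {x : ℝ} (hx : x ∈ Icc (-1) 1) : _root_.artanh x = Real.artanh x :=
  (Real.artanh_eq_half_log hx).symm

theorem sin_bearing_eq_tanh_general
    (μ₂ : ℝ) (α₂ : ℝ → ℝ)
    (hODE : ∀ t : ℝ, 0 ≤ t → HasDerivAt α₂ (μ₂ * Real.cos (α₂ t)) t)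
    (h0 : α₂ 0 ∈ Set.Ioo (-(π / 2)) (π / 2)) :
    ∀ t : ℝ, 0 ≤ t →
      Real.sin (α₂ t) = Real.tanh (μ₂ * t + _root_.artanh (Real.sin (α₂ 0))) := by
  have hsin0 := sin_mem_Ioo_of_mem_Ioo h0
  refine eq_tanh_of_hasDerivAt_mul_one_sub_sq
    (fun t ht => hasDerivAt_sin_comp_of_hasDerivAt_mul_cos (hODE t ht))
    (fun t _ => ⟨neg_one_le_sin _, sin_le_one _⟩) ?_
  rw [artanh_eq_real_artanh (Ioo_subset_Icc_self hsin0), tanh_artanh hsin0]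

/-- Under the constant bearing steering control, the follower bearing `α₂` obeys
`α₂' = μ₂ cos α₂`, and its sine is an explicit hyperbolic tangent. -/
theorem sin_bearing_eq_tanh
    (μ₂ : ℝ) (hμ₂ : 0 < μ₂) (α₂ : ℝ → ℝ)
    (hdiff : Differentiable ℝ α₂)
    (hODE : ∀ t : ℝ, 0 ≤ t → HasDerivAt α₂ (μ₂ * Real.cos (α₂ t)) t)
    (h0 : α₂ 0 ∈ Set.Ioo (-(π / 2)) (π / 2)) :
    ∀ t : ℝ, 0 ≤ t →
      Real.sin (α₂ t) = Real.tanh (μ₂ * t + _root_.artanh (Real.sin (α₂ 0))) :=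
  sin_bearing_eq_tanh_general μ₂ α₂ hODE h0
end

section
/- Let μ₂ > 0 and let α₂ : ℝ → ℝ be a differentiable function satisfying α₂'(t) = μ₂ · cos(α₂(t)) for all t ≥ 0, with initial condition α₂(0) ∈ (-π/2, π/2). Then sin(α₂(t)) → 1 as t → ∞, and moreover α₂(t) → π/2 as t → ∞. -/
/-! The equation `α' = μ cos α` is solved in closed form by `α t = gd (μ t + c)`, where
`gd x = arctan (sinh x)` is the Gudermannian function, since `gd' = 1 / cosh = cos ∘ gd`.
As `α 0 ∈ (-π/2, π/2)`, the choice `c = arsinh (tan (α 0))` matches the initial value;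
the field `μ cos` is Lipschitz, so this is the only solution, and `gd x → π/2` as `x → ∞`. -/

open Real Set Filter Topology

namespace Real

noncomputable def gudermannian (x : ℝ) : ℝ := arctan (sinh x)

theorem cos_gudermannian (x : ℝ) : cos (gudermannian x) = 1 / cosh x := by
  rw [gudermannian, cos_arctan, add_comm, ← cosh_sq, sqrt_sq (cosh_pos x).le]

theorem hasDerivAt_gudermannian (x : ℝ) :
    HasDerivAt gudermannian (cos (gudermannian x)) x := by
  refine ((hasDerivAt_arctan (sinh x)).comp x (hasDerivAt_sinh x)).congr_deriv ?_
  rw [cos_gudermannian, add_comm, ← cosh_sq]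
  field_simp [(cosh_pos x).ne']

theorem gudermannian_arsinh_tan {x : ℝ} (hx₁ : -(π / 2) < x) (hx₂ : x < π / 2) :
    gudermannian (arsinh (tan x)) = x := by
  rw [gudermannian, sinh_arsinh, arctan_tan hx₁ hx₂]

theorem tendsto_sinh_atTop : Tendsto sinh atTop atTop :=
  tendsto_atTop_mono' atTop ((eventually_ge_atTop 0).mono fun _ hx => self_le_sinh_iff.mpr hx)
    tendsto_id

theorem tendsto_gudermannian_atTop : Tendsto gudermannian atTop (𝓝 (π / 2)) :=
  tendsto_nhds_of_tendsto_nhdsWithin (tendsto_arctan_atTop.comp tendsto_sinh_atTop)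

end Real

theorem eqOn_Ici_of_hasDerivAt_of_lipschitzWith {E : Type*} [NormedAddCommGroup E]
    [NormedSpace ℝ E] {v : E → E} {K : NNReal} (hv : LipschitzWith K v) {f g : ℝ → E} {a : ℝ}
    (hf : ∀ t, a ≤ t → HasDerivAt f (v (f t)) t) (hg : ∀ t, a ≤ t → HasDerivAt g (v (g t)) t)
    (ha : f a = g a) : EqOn f g (Ici a) := fun _ hb =>
  ODE_solution_unique (v := fun _ => v) (fun _ => hv)
    (fun t ht => (hf t ht.1).continuousAt.continuousWithinAt)
    (fun t ht => (hf t ht.1).hasDerivWithinAt)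
    (fun t ht => (hg t ht.1).continuousAt.continuousWithinAt)
    (fun t ht => (hg t ht.1).hasDerivWithinAt) ha ⟨hb, le_rfl⟩

theorem hasDerivAt_gudermannian_mul_add (μ c t : ℝ) :
    HasDerivAt (fun t => gudermannian (μ * t + c)) (μ * cos (gudermannian (μ * t + c))) t := by
  have h := (hasDerivAt_gudermannian (μ * t + c)).comp t
    (((hasDerivAt_id' t).const_mul μ).add_const c)
  exact h.congr_deriv (by ring)

theorem bearing_tendsto_pi_div_two_general
    (μ₂ : ℝ) (hμ₂ : 0 < μ₂) (α₂ : ℝ → ℝ)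
    (hODE : ∀ t : ℝ, 0 ≤ t → HasDerivAt α₂ (μ₂ * Real.cos (α₂ t)) t)
    (h0 : α₂ 0 ∈ Set.Ioo (-(π / 2)) (π / 2)) :
    Filter.Tendsto (fun t => Real.sin (α₂ t)) Filter.atTop (nhds 1) ∧
      Filter.Tendsto α₂ Filter.atTop (nhds (π / 2)) := by
  set c := arsinh (tan (α₂ 0))
  have hsol : EqOn α₂ (fun t => gudermannian (μ₂ * t + c)) (Ici 0) :=
    eqOn_Ici_of_hasDerivAt_of_lipschitzWith ((lipschitzWith_smul μ₂).comp lipschitzWith_cos)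
      hODE (fun t _ => hasDerivAt_gudermannian_mul_add μ₂ c t)
      (by simp [c, gudermannian_arsinh_tan h0.1 h0.2])
  have hlim : Tendsto α₂ atTop (𝓝 (π / 2)) :=
    (tendsto_gudermannian_atTop.comp
      ((tendsto_id.const_mul_atTop hμ₂).atTop_add tendsto_const_nhds)).congr'
      ((eventually_ge_atTop 0).mono fun t ht => (hsol ht).symm)
  refine ⟨?_, hlim⟩
  have hsin := (continuous_sin.tendsto _).comp hlim
  rwa [sin_pi_div_two] at hsin

/-- Under the constant bearing steering control, `sin (α₂ t) → 1` and `α₂ t → π/2`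
as `t → ∞`. -/
theorem bearing_tendsto_pi_div_two
    (μ₂ : ℝ) (hμ₂ : 0 < μ₂) (α₂ : ℝ → ℝ)
    (hdiff : Differentiable ℝ α₂)
    (hODE : ∀ t : ℝ, 0 ≤ t → HasDerivAt α₂ (μ₂ * Real.cos (α₂ t)) t)
    (h0 : α₂ 0 ∈ Set.Ioo (-(π / 2)) (π / 2)) :
    Filter.Tendsto (fun t => Real.sin (α₂ t)) Filter.atTop (nhds 1) ∧
      Filter.Tendsto α₂ Filter.atTop (nhds (π / 2)) :=
  bearing_tendsto_pi_div_two_general μ₂ hμ₂ α₂ hODE h0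
end

section
/- Let v₁ > 0, μ₁ > 0, ρ₀ > 0, let g : (0,∞) → ℝ be C² with derivative f = g', and let (ρ, α₁) : [0,∞) → (0,∞) × ℝ be a differentiable solution of the reduced shape dynamics ρ' = -v₁ cos α₁, α₁' = -μ₁ cos α₁ + v₁ f(ρ). Then the function V₁(t) = 1 + sin(α₁(t)) + g(ρ(t)) is differentiable with V₁'(t) = -μ₁ cos²(α₁(t)) ≤ 0 for all t ≥ 0. -/
open Real Set

theorem hasDerivAt_one_add_sin_add_comp {g ρ α : ℝ → ℝ} {g' ρ' α' t : ℝ}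
    (hg : HasDerivAt g g' (ρ t)) (hρ : HasDerivAt ρ ρ' t) (hα : HasDerivAt α α' t) :
    HasDerivAt (fun s => 1 + sin (α s) + g (ρ s)) (cos (α t) * α' + g' * ρ') t := by
  have hsin : HasDerivAt (fun s => sin (α s)) (cos (α t) * α') t :=
    (hasDerivAt_sin (α t)).comp t hα
  simpa only [Pi.add_apply, Function.comp_apply, add_assoc] using (hsin.add (hg.comp t hρ)).const_add 1

theorem lyapunov_derivative_ideal_general
    (v₁ μ₁ : ℝ) (hμ₁ : 0 < μ₁)
    (g f : ℝ → ℝ)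
    (hf : ∀ x ∈ Set.Ioi (0 : ℝ), HasDerivAt g (f x) x)
    (ρ α₁ : ℝ → ℝ)
    (hρpos : ∀ t : ℝ, 0 ≤ t → ρ t ∈ Set.Ioi (0 : ℝ))
    (hρ' : ∀ t : ℝ, 0 ≤ t → HasDerivAt ρ (-(v₁ * Real.cos (α₁ t))) t)
    (hα₁' : ∀ t : ℝ, 0 ≤ t →
      HasDerivAt α₁ (-(μ₁ * Real.cos (α₁ t)) + v₁ * f (ρ t)) t) :
    ∀ t : ℝ, 0 ≤ t →
      HasDerivAt (fun s => 1 + Real.sin (α₁ s) + g (ρ s))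
        (-(μ₁ * Real.cos (α₁ t) ^ 2)) t ∧
      -(μ₁ * Real.cos (α₁ t) ^ 2) ≤ 0 := by
  intro t ht
  refine ⟨?_, neg_nonpos.2 (by positivity)⟩
  -- the coupling terms `± v₁ f(ρ) cos α₁` cancel
  refine (hasDerivAt_one_add_sin_add_comp (hf _ (hρpos t ht)) (hρ' t ht) (hα₁' t ht)).congr_deriv ?_
  ring

/-- Along solutions of the reduced shape dynamics under the ideal speed control,
the Lyapunov function `V₁ = 1 + sin α₁ + g ∘ ρ` has derivative `-μ₁ cos² α₁ ≤ 0`. -/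
theorem lyapunov_derivative_ideal
    (v₁ μ₁ ρ₀ : ℝ) (hv₁ : 0 < v₁) (hμ₁ : 0 < μ₁) (hρ₀ : 0 < ρ₀)
    (g f : ℝ → ℝ)
    (hg : ContDiffOn ℝ 2 g (Set.Ioi 0))
    (hf : ∀ x ∈ Set.Ioi (0 : ℝ), HasDerivAt g (f x) x)
    (ρ α₁ : ℝ → ℝ)
    (hρpos : ∀ t : ℝ, 0 ≤ t → ρ t ∈ Set.Ioi (0 : ℝ))
    (hρ' : ∀ t : ℝ, 0 ≤ t → HasDerivAt ρ (-(v₁ * Real.cos (α₁ t))) t)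
    (hα₁' : ∀ t : ℝ, 0 ≤ t →
      HasDerivAt α₁ (-(μ₁ * Real.cos (α₁ t)) + v₁ * f (ρ t)) t) :
    ∀ t : ℝ, 0 ≤ t →
      HasDerivAt (fun s => 1 + Real.sin (α₁ s) + g (ρ s))
        (-(μ₁ * Real.cos (α₁ t) ^ 2)) t ∧
      -(μ₁ * Real.cos (α₁ t) ^ 2) ≤ 0 :=
  lyapunov_derivative_ideal_general v₁ μ₁ hμ₁ g f hf ρ α₁ hρpos hρ' hα₁'
end

section
/- Let v₁ > 0, μ₁ > 0, ρ₀ > 0, let g : (0,∞) → ℝ be C² with g(ρ₀) = 0, g(ρ) > 0 for ρ ≠ ρ₀, g(ρ) → ∞ as ρ → 0⁺ and as ρ → ∞, and f = g'. Let (ρ, α₁) : [0,∞) → (0,∞) × ℝ be a solution of ρ' = -v₁ cos α₁, α₁' = -μ₁ cos α₁ + v₁ f(ρ) with 1 + sin(α₁(0)) + g(ρ(0)) < 2. Then 1 + sin(α₁(t)) + g(ρ(t)) < 2 for all t ≥ 0, and there exist constants 0 < m ≤ M such that m ≤ ρ(t) ≤ M for all t ≥ 0; in particular the solution remains in a compact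 subset of (0,∞) × ℝ. -/
open Real Set Filter

/-!
Along a solution, `V = sin α₁ + g ∘ ρ` has derivative `-μ₁ cos² α₁ ≤ 0`: the coupling terms
`± v₁ f(ρ) cos α₁` cancel because `f = g'`. Hence `V` never exceeds its initial value, which gives
the invariance of `{V₁ < 2}`, and then `g(ρ) < 2`. Since `g` blows up at `0⁺` and at `∞`, the
sublevel set `{g ≤ 2}` is contained in a compact interval of `(0, ∞)`.
-/

theorem hasDerivAt_sin_add_comp_of_reduced_dynamics {g f ρ α : ℝ → ℝ} {v μ t : ℝ}
    (hg : HasDerivAt g (f (ρ t)) (ρ t)) (hρ : HasDerivAt ρ (-(v * cos (α t))) t)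
    (hα : HasDerivAt α (-(μ * cos (α t)) + v * f (ρ t)) t) :
    HasDerivAt (fun s => sin (α s) + g (ρ s)) (-(μ * cos (α t) ^ 2)) t :=
  (((hasDerivAt_sin (α t)).comp t hα).add (hg.comp t hρ)).congr_deriv (by ring)

theorem le_apply_zero_of_hasDerivAt_nonpos {V V' : ℝ → ℝ}
    (hV : ∀ t, 0 ≤ t → HasDerivAt V (V' t) t) (hV' : ∀ t, 0 ≤ t → V' t ≤ 0)
    {t : ℝ} (ht : 0 ≤ t) : V t ≤ V 0 := by
  have hanti : AntitoneOn V (Ici 0) := by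
    refine antitoneOn_of_hasDerivWithinAt_nonpos (f' := V') (convex_Ici 0)
      (fun s hs => (hV s hs).continuousAt.continuousWithinAt) (fun s hs => ?_) (fun s hs => ?_)
    · rw [interior_Ici] at hs
      exact (hV s hs.le).hasDerivWithinAt
    · rw [interior_Ici] at hs
      exact hV' s hs.le
  exact hanti self_mem_Ici ht ht

theorem exists_sublevel_subset_Icc_of_tendsto_atTop {g : ℝ → ℝ}
    (h0 : Tendsto g (nhdsWithin 0 (Ioi 0)) atTop) (htop : Tendsto g atTop atTop) (c : ℝ) :
    ∃ m M : ℝ, 0 < m ∧ {x ∈ Ioi 0 | g x ≤ c} ⊆ Icc m M := by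
  obtain ⟨m, hm, hsmall⟩ :=
    mem_nhdsGT_iff_exists_Ioo_subset.mp (h0.eventually (eventually_gt_atTop c))
  obtain ⟨M, hlarge⟩ := eventually_atTop.mp (htop.eventually (eventually_gt_atTop c))
  refine ⟨m, M, hm, fun x ⟨hx, hgx⟩ => ⟨?_, ?_⟩⟩
  · by_contra! hxm
    exact (hsmall ⟨hx, hxm⟩).not_ge hgx
  · by_contra! hMx
    exact (hlarge x hMx.le).not_ge hgx

theorem sublevel_set_invariant_and_rho_bounded_general
    (v₁ μ₁ : ℝ) (hμ₁ : 0 < μ₁)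
    (g f : ℝ → ℝ)
    (hglim0 : Filter.Tendsto g (nhdsWithin 0 (Set.Ioi 0)) Filter.atTop)
    (hglimtop : Filter.Tendsto g Filter.atTop Filter.atTop)
    (hf : ∀ x ∈ Set.Ioi (0 : ℝ), HasDerivAt g (f x) x)
    (ρ α₁ : ℝ → ℝ)
    (hρpos : ∀ t : ℝ, 0 ≤ t → ρ t ∈ Set.Ioi (0 : ℝ))
    (hρ' : ∀ t : ℝ, 0 ≤ t → HasDerivAt ρ (-(v₁ * Real.cos (α₁ t))) t)
    (hα₁' : ∀ t : ℝ, 0 ≤ t →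
      HasDerivAt α₁ (-(μ₁ * Real.cos (α₁ t)) + v₁ * f (ρ t)) t)
    (hV0 : 1 + Real.sin (α₁ 0) + g (ρ 0) < 2) :
    (∀ t : ℝ, 0 ≤ t → 1 + Real.sin (α₁ t) + g (ρ t) < 2) ∧
      ∃ m M : ℝ, 0 < m ∧ m ≤ M ∧ ∀ t : ℝ, 0 ≤ t → m ≤ ρ t ∧ ρ t ≤ M := by
  have hV_le : ∀ t, 0 ≤ t → sin (α₁ t) + g (ρ t) ≤ sin (α₁ 0) + g (ρ 0) :=
    fun t ht => le_apply_zero_of_hasDerivAt_nonpos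
      (fun s hs => hasDerivAt_sin_add_comp_of_reduced_dynamics
        (hf (ρ s) (hρpos s hs)) (hρ' s hs) (hα₁' s hs))
      (fun s _ => by nlinarith [sq_nonneg (cos (α₁ s))]) ht
  have hinv : ∀ t, 0 ≤ t → 1 + sin (α₁ t) + g (ρ t) < 2 := fun t ht => by
    linarith [hV_le t ht]
  obtain ⟨m, M, hm, hsub⟩ := exists_sublevel_subset_Icc_of_tendsto_atTop hglim0 hglimtop 2
  have hρ_mem : ∀ t, 0 ≤ t → ρ t ∈ Icc m M := fun t ht =>
    hsub ⟨hρpos t ht, by linarith [hinv t ht, neg_one_le_sin (α₁ t)]⟩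
  exact ⟨hinv, m, M, hm, (hρ_mem 0 le_rfl).1.trans (hρ_mem 0 le_rfl).2, hρ_mem⟩

/-- The sublevel set `{V₁ < 2}` of the Lyapunov function is forward invariant, and
solutions starting in it have `ρ` confined to a compact interval `[m, M] ⊆ (0, ∞)`. -/
theorem sublevel_set_invariant_and_rho_bounded
    (v₁ μ₁ ρ₀ : ℝ) (hv₁ : 0 < v₁) (hμ₁ : 0 < μ₁) (hρ₀ : 0 < ρ₀)
    (g f : ℝ → ℝ)
    (hg : ContDiffOn ℝ 2 g (Set.Ioi 0))
    (hg0 : g ρ₀ = 0)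
    (hgpos : ∀ x ∈ Set.Ioi (0 : ℝ), x ≠ ρ₀ → 0 < g x)
    (hglim0 : Filter.Tendsto g (nhdsWithin 0 (Set.Ioi 0)) Filter.atTop)
    (hglimtop : Filter.Tendsto g Filter.atTop Filter.atTop)
    (hf : ∀ x ∈ Set.Ioi (0 : ℝ), HasDerivAt g (f x) x)
    (ρ α₁ : ℝ → ℝ)
    (hρpos : ∀ t : ℝ, 0 ≤ t → ρ t ∈ Set.Ioi (0 : ℝ))
    (hρ' : ∀ t : ℝ, 0 ≤ t → HasDerivAt ρ (-(v₁ * Real.cos (α₁ t))) t)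
    (hα₁' : ∀ t : ℝ, 0 ≤ t →
      HasDerivAt α₁ (-(μ₁ * Real.cos (α₁ t)) + v₁ * f (ρ t)) t)
    (hV0 : 1 + Real.sin (α₁ 0) + g (ρ 0) < 2) :
    (∀ t : ℝ, 0 ≤ t → 1 + Real.sin (α₁ t) + g (ρ t) < 2) ∧
      ∃ m M : ℝ, 0 < m ∧ m ≤ M ∧ ∀ t : ℝ, 0 ≤ t → m ≤ ρ t ∧ ρ t ≤ M :=
  sublevel_set_invariant_and_rho_bounded_general v₁ μ₁ hμ₁ g f hglim0 hglimtop hf ρ α₁ hρpos hρ'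
    hα₁' hV0
end

section
/- (Proposition 1, Lyapunov stability) Let v₁ > 0, μ₁ > 0, ρ₀ > 0, let g : (0,∞) → ℝ be C² with g(ρ₀) = 0, g(ρ) > 0 for ρ ≠ ρ₀, g(ρ) → ∞ as ρ → 0⁺ and as ρ → ∞, and f = g'. Then for every ε > 0 there exists δ > 0 such that every solution (ρ, α₁) : [0,∞) → (0,∞) × ℝ of ρ' = -v₁ cos α₁, α₁' = -μ₁ cos α₁ + v₁ f(ρ) with |ρ(0) - ρ₀| + |α₁(0) + π/2| < δ satisfies |ρ(t) - ρ₀| + |α₁(t) + π/2| < ε for all t ≥ 0. -/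
/-!
`V(ρ, α) = g ρ + sin α + 1` is a Lyapunov function: it vanishes at `(ρ₀, -π/2)`, is positive
on every small sphere around that point, and along solutions `V' = -μ₁ cos² α ≤ 0`, the two
terms in `v₁ f(ρ) cos α` cancelling. Since `V` has a positive minimum on the compact sphere of
radius `r`, a solution starting where `V` is below that minimum can never reach the sphere.
-/

open Real Set Metric

lemma lt_of_antitoneOn_of_forall_eq_le {N V : ℝ → ℝ} {r c t : ℝ} (ht : 0 ≤ t)
    (hN : ContinuousOn N (Icc 0 t)) (hV : AntitoneOn V (Icc 0 t))
    (hlevel : ∀ s ∈ Icc 0 t, N s = r → c ≤ V s) (hN0 : N 0 < r) (hV0 : V 0 < c) :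
    N t < r := by
  by_contra! hNt
  obtain ⟨s, hs, hNs⟩ := intermediate_value_Icc ht hN ⟨hN0.le, hNt⟩
  have hVs : V s ≤ V 0 := hV (left_mem_Icc.2 ht) hs hs.1
  linarith [hlevel s hs hNs]

theorem exists_pos_forall_dist_lt_of_antitoneOn {X : Type*} [PseudoMetricSpace X]
    [ProperSpace X] {V : X → ℝ} {x₀ : X} {r : ℝ} (hr : 0 < r)
    (hV : ContinuousOn V (closedBall x₀ r)) (hsphere : ∀ x ∈ sphere x₀ r, V x₀ < V x) :
    ∃ δ > 0, ∀ γ : ℝ → X, ContinuousOn γ (Ici 0) → AntitoneOn (V ∘ γ) (Ici 0) →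
      dist (γ 0) x₀ < δ → ∀ t, 0 ≤ t → dist (γ t) x₀ < r := by
  obtain ⟨c, hc, hcV⟩ := (isCompact_sphere x₀ r).exists_forall_le'
    (hV.mono sphere_subset_closedBall) hsphere
  have hVx₀ : ContinuousAt V x₀ := hV.continuousAt (closedBall_mem_nhds x₀ hr)
  obtain ⟨δ, hδ, hVδ⟩ := Metric.continuousAt_iff.1 hVx₀ (c - V x₀) (sub_pos.2 hc)
  refine ⟨min δ r, lt_min hδ hr, fun γ hγ hVγ hγ0 t ht => ?_⟩
  refine lt_of_antitoneOn_of_forall_eq_le (V := V ∘ γ) (c := c) ht ?_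
    (hVγ.mono Icc_subset_Ici_self) (fun s _ hs => hcV (γ s) hs) (hγ0.trans_le (min_le_right _ _)) ?_
  · exact (continuous_id.dist continuous_const).comp_continuousOn
      (hγ.mono Icc_subset_Ici_self)
  · have hVγ0 := hVδ (hγ0.trans_le (min_le_left _ _))
    rw [Real.dist_eq, abs_lt] at hVγ0
    simpa using hVγ0.2

lemma antitoneOn_Ici_of_hasDerivAt_nonpos {u u' : ℝ → ℝ} {a : ℝ}
    (hu : ∀ t, a ≤ t → HasDerivAt u (u' t) t) (hu' : ∀ t, a ≤ t → u' t ≤ 0) :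
    AntitoneOn u (Ici a) := by
  refine antitoneOn_of_hasDerivWithinAt_nonpos (f' := u') (convex_Ici a)
    (fun t ht => (hu t ht).continuousAt.continuousWithinAt) (fun t ht => ?_) (fun t ht => ?_)
  · rw [interior_Ici] at ht
    exact (hu t (le_of_lt ht)).hasDerivWithinAt
  · rw [interior_Ici] at ht
    exact hu' t (le_of_lt ht)

lemma sin_add_one_pos {α : ℝ} (h0 : α + π / 2 ≠ 0) (h2π : |α + π / 2| < 2 * π) :
    0 < sin α + 1 := by
  have hsin : sin α = -cos (α + π / 2) := by rw [cos_add_pi_div_two, neg_neg]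
  have hcos : cos (α + π / 2) ≠ 1 := fun h =>
    h0 ((cos_eq_one_iff_of_lt_of_lt (abs_lt.1 h2π).1 (abs_lt.1 h2π).2).1 h)
  rw [hsin]
  linarith [lt_of_le_of_ne (cos_le_one (α + π / 2)) hcos]

lemma dist_equilibrium_eq_max (ρ α ρ₀ : ℝ) :
    dist (ρ, α) (ρ₀, -(π / 2)) = max |ρ - ρ₀| |α + π / 2| := by
  rw [Prod.dist_eq, Real.dist_eq, Real.dist_eq, sub_neg_eq_add]

noncomputable def shapeLyapunov (g : ℝ → ℝ) (p : ℝ × ℝ) : ℝ :=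
  g p.1 + sin p.2 + 1

lemma shapeLyapunov_equilibrium {g : ℝ → ℝ} {ρ₀ : ℝ} (hg0 : g ρ₀ = 0) :
    shapeLyapunov g (ρ₀, -(π / 2)) = 0 := by
  simp [shapeLyapunov, hg0]

lemma continuousOn_shapeLyapunov {g : ℝ → ℝ} {s : Set ℝ} (hg : ContinuousOn g s) :
    ContinuousOn (shapeLyapunov g) (Prod.fst ⁻¹' s) :=
  ((hg.comp continuous_fst.continuousOn fun _ hp => hp).add
    (continuous_sin.comp continuous_snd).continuousOn).add continuousOn_const

lemma shapeLyapunov_pos_of_mem_sphere {g : ℝ → ℝ} {ρ₀ r : ℝ} (hr : 0 < r) (hrρ₀ : r < ρ₀)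
    (hr2π : r < 2 * π) (hgpos : ∀ x ∈ Ioi (0 : ℝ), x ≠ ρ₀ → 0 < g x) (hg0 : g ρ₀ = 0)
    {p : ℝ × ℝ} (hp : p ∈ sphere (ρ₀, -(π / 2)) r) :
    0 < shapeLyapunov g p := by
  obtain ⟨ρ, α⟩ := p
  rw [mem_sphere, dist_equilibrium_eq_max] at hp
  unfold shapeLyapunov
  by_cases hρ : ρ = ρ₀
  · subst hρ
    rw [sub_self, abs_zero, max_eq_right (abs_nonneg _)] at hp
    have := sin_add_one_pos (α := α) (fun h => by simp [h] at hp; linarith) (by linarith)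
    linarith
  · have hρr : |ρ - ρ₀| ≤ r := hp ▸ le_max_left _ _
    have hρpos : 0 < ρ := by linarith [(abs_le.1 hρr).1]
    linarith [hgpos ρ hρpos hρ, neg_one_le_sin α]

lemma hasDerivAt_shapeLyapunov_comp {v₁ μ₁ t : ℝ} {g f ρ α : ℝ → ℝ}
    (hf : HasDerivAt g (f (ρ t)) (ρ t)) (hρ : HasDerivAt ρ (-(v₁ * cos (α t))) t)
    (hα : HasDerivAt α (-(μ₁ * cos (α t)) + v₁ * f (ρ t)) t) :
    HasDerivAt (fun s => shapeLyapunov g (ρ s, α s)) (-(μ₁ * cos (α t) ^ 2)) t := by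
  have h : HasDerivAt (fun s => g (ρ s) + sin (α s) + 1)
      (f (ρ t) * -(v₁ * cos (α t)) + cos (α t) * (-(μ₁ * cos (α t)) + v₁ * f (ρ t))) t :=
    ((hf.comp t hρ).add ((hasDerivAt_sin (α t)).comp t hα)).add_const 1
  exact h.congr_deriv (by ring)

theorem prop1_lyapunov_stability_general
    (v₁ μ₁ ρ₀ : ℝ) (hμ₁ : 0 < μ₁) (hρ₀ : 0 < ρ₀)
    (g f : ℝ → ℝ)
    (hg0 : g ρ₀ = 0)
    (hgpos : ∀ x ∈ Set.Ioi (0 : ℝ), x ≠ ρ₀ → 0 < g x)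
    (hf : ∀ x ∈ Set.Ioi (0 : ℝ), HasDerivAt g (f x) x) :
    ∀ ε > (0 : ℝ), ∃ δ > (0 : ℝ),
      ∀ ρ α₁ : ℝ → ℝ,
        (∀ t : ℝ, 0 ≤ t → ρ t ∈ Set.Ioi (0 : ℝ)) →
        (∀ t : ℝ, 0 ≤ t → HasDerivAt ρ (-(v₁ * Real.cos (α₁ t))) t) →
        (∀ t : ℝ, 0 ≤ t →
          HasDerivAt α₁ (-(μ₁ * Real.cos (α₁ t)) + v₁ * f (ρ t)) t) →
        |ρ 0 - ρ₀| + |α₁ 0 + π / 2| < δ →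
        ∀ t : ℝ, 0 ≤ t → |ρ t - ρ₀| + |α₁ t + π / 2| < ε := by
  intro ε hε
  -- the sup distance of ℝ × ℝ is within a factor 2 of `|ρ - ρ₀| + |α₁ + π/2|`
  obtain ⟨r, hr, hrε, hrρ₀, hrπ⟩ : ∃ r, 0 < r ∧ 2 * r ≤ ε ∧ r < ρ₀ ∧ r < 2 * π :=
    ⟨min ε (min ρ₀ π) / 2, by positivity, by linarith [min_le_left ε (min ρ₀ π)],
      by linarith [min_le_left ρ₀ π, min_le_right ε (min ρ₀ π)],
      by linarith [min_le_right ρ₀ π, min_le_right ε (min ρ₀ π), pi_pos]⟩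
  have hball : closedBall (ρ₀, -(π / 2)) r ⊆ Prod.fst ⁻¹' Ioi 0 := fun ⟨ρ, α⟩ hp => by
    rw [mem_closedBall, dist_equilibrium_eq_max, max_le_iff, abs_le] at hp
    simp only [mem_preimage, mem_Ioi]
    linarith [hp.1.1]
  obtain ⟨δ, hδ, hstable⟩ := exists_pos_forall_dist_lt_of_antitoneOn hr
    ((continuousOn_shapeLyapunov fun x hx => (hf x hx).continuousAt.continuousWithinAt).mono hball)
    fun p hp => (shapeLyapunov_equilibrium hg0).trans_lt
      (shapeLyapunov_pos_of_mem_sphere hr hrρ₀ hrπ hgpos hg0 hp)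
  refine ⟨δ, hδ, fun ρ α₁ hρpos hρ hα hinit t ht => ?_⟩
  have hγ : ContinuousOn (fun s => (ρ s, α₁ s)) (Ici 0) := fun s hs =>
    ((hρ s hs).continuousAt.prodMk (hα s hs).continuousAt).continuousWithinAt
  have hV : AntitoneOn (shapeLyapunov g ∘ fun s => (ρ s, α₁ s)) (Ici 0) :=
    antitoneOn_Ici_of_hasDerivAt_nonpos
      (fun s hs => hasDerivAt_shapeLyapunov_comp (hf _ (hρpos s hs)) (hρ s hs) (hα s hs))
      fun s _ => neg_nonpos.2 (mul_nonneg hμ₁.le (sq_nonneg _))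
  have h0 : dist (ρ 0, α₁ 0) (ρ₀, -(π / 2)) < δ := by
    rw [dist_equilibrium_eq_max]
    exact (max_le_add_of_nonneg (abs_nonneg _) (abs_nonneg _)).trans_lt hinit
  have ht' := hstable _ hγ hV h0 t ht
  rw [dist_equilibrium_eq_max, max_lt_iff] at ht'
  linarith

/-- Proposition 1 (Lyapunov stability): the equilibrium `(ρ₀, -π/2)` of the
closed-loop reduced shape dynamics is Lyapunov stable. -/
theorem prop1_lyapunov_stability
    (v₁ μ₁ ρ₀ : ℝ) (hv₁ : 0 < v₁) (hμ₁ : 0 < μ₁) (hρ₀ : 0 < ρ₀)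
    (g f : ℝ → ℝ)
    (hg : ContDiffOn ℝ 2 g (Set.Ioi 0))
    (hg0 : g ρ₀ = 0)
    (hgpos : ∀ x ∈ Set.Ioi (0 : ℝ), x ≠ ρ₀ → 0 < g x)
    (hglim0 : Filter.Tendsto g (nhdsWithin 0 (Set.Ioi 0)) Filter.atTop)
    (hglimtop : Filter.Tendsto g Filter.atTop Filter.atTop)
    (hf : ∀ x ∈ Set.Ioi (0 : ℝ), HasDerivAt g (f x) x) :
    ∀ ε > (0 : ℝ), ∃ δ > (0 : ℝ),
      ∀ ρ α₁ : ℝ → ℝ,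
        (∀ t : ℝ, 0 ≤ t → ρ t ∈ Set.Ioi (0 : ℝ)) →
        (∀ t : ℝ, 0 ≤ t → HasDerivAt ρ (-(v₁ * Real.cos (α₁ t))) t) →
        (∀ t : ℝ, 0 ≤ t →
          HasDerivAt α₁ (-(μ₁ * Real.cos (α₁ t)) + v₁ * f (ρ t)) t) →
        |ρ 0 - ρ₀| + |α₁ 0 + π / 2| < δ →
        ∀ t : ℝ, 0 ≤ t → |ρ t - ρ₀| + |α₁ t + π / 2| < ε :=
  prop1_lyapunov_stability_general v₁ μ₁ ρ₀ hμ₁ hρ₀ g f hg0 hgpos hf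
end

section
/- Let v₁ > 0, μ₁ > 0, ρ₀ > 0, let g : (0,∞) → ℝ be C² with g(ρ₀) = 0, g(ρ) > 0 for ρ ≠ ρ₀, g(ρ) → ∞ as ρ → 0⁺ and as ρ → ∞, f = g', and f'(ρ₀) > 0. There exists δ > 0 such that for every continuous input u₁ : [0,∞) → ℝ with sup_t |u₁(t)| < δ and u₁(t) → 0 as t → ∞, every solution (ρ, α₁) of ρ' = -v₁ cos α₁, α₁' = -u₁(t) - μ₁ cos α₁ + v₁ f(ρ) with |ρ(0) - ρ₀| + |α₁(0) + π/2| < δ satisfies ρ(t) → ρ₀ and α₁(t) → -π/2 as t → ∞. -/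
/-!
In the deviations `x = ρ - ρ₀`, `β = α₁ + π / 2` the system reads `x' = -v₁ sin β`,
`β' = -u₁ - μ₁ sin β + v₁ f(ρ₀ + x)`, and `f(ρ₀) = 0` because `ρ₀` minimises `g`.
With `k = f'(ρ₀) > 0` and `ε` small, `V = k x² / 2 + (1 - cos β) - ε x sin β` is comparable to
`x² + β²` near the origin and decreases there as `V' ≤ -c V + 2 |u₁|`. By Grönwall's inequality a
small sublevel set of `V` is invariant as long as `|u₁|` stays small, and inside it `V → 0` once
`u₁ → 0`.
-/

open Real Set Filter Topology

theorem le_of_hasDerivAt_le_neg_mul_add {P D : ℝ → ℝ} {c K a b : ℝ} (hc : c ≠ 0)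
    (hP : ∀ t ∈ Icc a b, HasDerivAt P (D t) t) (hD : ∀ t ∈ Ico a b, D t ≤ -c * P t + K) :
    ∀ t ∈ Icc a b, P t ≤ K / c + (P a - K / c) * exp (-c * (t - a)) := by
  intro t ht
  have h := le_gronwallBound_of_liminf_deriv_right_le
    (fun t ht => (hP t ht).continuousAt.continuousWithinAt)
    (fun t ht r hr => by
      simpa [slope_def_field, div_eq_inv_mul] using
        (hP t (Ico_subset_Icc_self ht)).hasDerivWithinAt.liminf_right_slope_le hr)
    le_rfl hD t ht
  rw [gronwallBound_of_K_ne_0 (neg_ne_zero.2 hc)] at h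
  convert h using 1
  field_simp
  ring

theorem le_max_of_hasDerivAt_le_neg_mul_add {P D : ℝ → ℝ} {c K a b : ℝ} (hc : 0 < c)
    (hP : ∀ t ∈ Icc a b, HasDerivAt P (D t) t) (hD : ∀ t ∈ Ico a b, D t ≤ -c * P t + K) :
    ∀ t ∈ Icc a b, P t ≤ max (P a) (K / c) := by
  intro t ht
  have hexp : exp (-c * (t - a)) ≤ 1 := exp_le_one_iff.2 (by nlinarith [ht.1])
  have hexp0 := (exp_pos (-c * (t - a))).le
  have := le_of_hasDerivAt_le_neg_mul_add hc.ne' hP hD t ht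
  rcases le_total (P a) (K / c) with h | h
  · exact le_max_of_le_right (by nlinarith)
  · exact le_max_of_le_left (by nlinarith)

theorem tendsto_zero_of_hasDerivAt_le_neg_mul_add {P D w : ℝ → ℝ} {c : ℝ} (hc : 0 < c)
    (hP : ∀ t ≥ 0, HasDerivAt P (D t) t) (hD : ∀ t ≥ 0, D t ≤ -c * P t + w t)
    (hw : Tendsto w atTop (𝓝 0)) (hP0 : ∀ t ≥ 0, 0 ≤ P t) :
    Tendsto P atTop (𝓝 0) := by
  refine tendsto_order.2 ⟨fun a ha => ?_, fun e he => ?_⟩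
  · filter_upwards [eventually_ge_atTop 0] with t ht using ha.trans_le (hP0 t ht)
  obtain ⟨T, hT⟩ := eventually_atTop.1
    ((hw.eventually (gt_mem_nhds (by positivity : 0 < c * e / 2))).and (eventually_ge_atTop 0))
  have hT0 : 0 ≤ T := (hT T le_rfl).2
  have hdecay : Tendsto (fun t => (P T - e / 2) * exp (-c * (t - T))) atTop (𝓝 0) := by
    have : Tendsto (fun t => -c * (t - T)) atTop atBot :=
      (tendsto_atTop_add_const_right _ (-T) tendsto_id).const_mul_atTop_of_neg (neg_neg_of_pos hc)
    simpa using (tendsto_exp_atBot.comp this).const_mul (P T - e / 2)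
  filter_upwards [hdecay.eventually (gt_mem_nhds (half_pos he)), eventually_ge_atTop T]
    with t hsmall ht
  have := le_of_hasDerivAt_le_neg_mul_add (K := c * e / 2) hc.ne'
    (fun s hs => hP s (hT0.trans hs.1))
    (fun s hs => (hD s (hT0.trans hs.1)).trans (by linarith [(hT s hs.1).1])) t ⟨ht, le_rfl⟩
  rw [show c * e / 2 / c = e / 2 by field_simp] at this
  linarith

theorem mapsTo_Ici_of_forall_mapsTo_Icc {E : Type*} [TopologicalSpace E] {γ : ℝ → E}
    {U K : Set E} (hγ : ContinuousOn γ (Ici 0)) (hU : IsOpen U) (hK : IsClosed K) (hUK : U ⊆ K)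
    (h0 : γ 0 ∈ U) (hstep : ∀ T > 0, MapsTo γ (Icc 0 T) K → γ T ∈ U) : MapsTo γ (Ici 0) U := by
  intro t₀ ht₀
  by_contra hγt₀
  have hS : IsCompact (Icc 0 t₀ ∩ γ ⁻¹' Uᶜ) :=
    isCompact_Icc.of_isClosed_subset
      ((hγ.mono Icc_subset_Ici_self).preimage_isClosed_of_isClosed isClosed_Icc hU.isClosed_compl)
      inter_subset_left
  -- `T` is the first exit time from `U`
  obtain ⟨T, ⟨hT, hγT⟩, hTmin⟩ := hS.exists_isLeast ⟨t₀, ⟨⟨ht₀, le_rfl⟩, hγt₀⟩⟩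
  have hbefore : MapsTo γ (Ico 0 T) U := fun t ht => by
    by_contra h
    exact (hTmin ⟨⟨ht.1, ht.2.le.trans hT.2⟩, h⟩).not_gt ht.2
  have hT0 : 0 < T := hT.1.lt_of_ne (by rintro rfl; exact hγT h0)
  refine hγT (hstep T hT0 fun t ht => ?_)
  rcases ht.2.lt_or_eq with h | rfl
  · exact hUK (hbefore ⟨ht.1, h⟩)
  · have hlim := ((hγ t hT.1).mono Ico_subset_Ici_self).mem_closure_image
      (by rw [closure_Ico hT0.ne]; exact right_mem_Icc.2 hT0.le)
    exact closure_minimal (hbefore.image_subset.trans hUK) hK hlim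

theorem mapsTo_Ici_of_hasDerivAt_le_neg_mul_add {E : Type*} [TopologicalSpace E] {γ : ℝ → E}
    {U K : Set E} {V D : ℝ → ℝ} {c L m : ℝ} (hc : 0 < c) (hγ : ContinuousOn γ (Ici 0))
    (hU : IsOpen U) (hK : IsClosed K) (hUK : U ⊆ K) (h0 : γ 0 ∈ U)
    (hV : ∀ t ≥ 0, HasDerivAt V (D t) t) (hD : ∀ t ≥ 0, γ t ∈ K → D t ≤ -c * V t + L)
    (hm : max (V 0) (L / c) < m) (hexit : ∀ t ≥ 0, γ t ∈ K → V t < m → γ t ∈ U) :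
    MapsTo γ (Ici 0) U :=
  mapsTo_Ici_of_forall_mapsTo_Icc hγ hU hK hUK h0 fun T hT hKT =>
    hexit T hT.le (hKT (right_mem_Icc.2 hT.le))
      ((le_max_of_hasDerivAt_le_neg_mul_add hc (fun t ht => hV t ht.1)
        (fun t ht => hD t ht.1 (hKT (Ico_subset_Icc_self ht))) T
        (right_mem_Icc.2 hT.le)).trans_lt hm)

theorem tendsto_zero_of_sq_le_mul {x P : ℝ → ℝ} {C : ℝ} (hP : Tendsto P atTop (𝓝 0))
    (h : ∀ᶠ t in atTop, x t ^ 2 ≤ C * P t) : Tendsto x atTop (𝓝 0) := by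
  have hsq : Tendsto (fun t => x t ^ 2) atTop (𝓝 0) :=
    squeeze_zero' (Eventually.of_forall fun t => sq_nonneg _) h (by simpa using hP.const_mul C)
  rw [tendsto_zero_iff_abs_tendsto_zero]
  simpa [Function.comp_def, sqrt_sq_eq_abs] using (continuous_sqrt.tendsto 0).comp hsq

theorem exists_abs_sub_mul_le_of_hasDerivAt {φ : ℝ → ℝ} {k η : ℝ} (hφ : HasDerivAt φ k 0)
    (hφ0 : φ 0 = 0) (hη : 0 < η) : ∃ r > 0, r ≤ 1 ∧ ∀ x, |x| ≤ r → |φ x - k * x| ≤ η * |x| := by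
  obtain ⟨r, hr, hball⟩ := Metric.eventually_nhds_iff.1
    ((hasDerivAt_iff_isLittleO_nhds_zero.1 hφ).def hη)
  refine ⟨min (r / 2) 1, by positivity, min_le_right _ _, fun x hx => ?_⟩
  have := hball (show dist x 0 < r by
    rw [Real.dist_eq, sub_zero]; linarith [min_le_left (r / 2) 1])
  simpa [hφ0, mul_comm x k] using this

theorem sin_sq_le_two_mul_one_sub_cos (β : ℝ) : sin β ^ 2 ≤ 2 * (1 - cos β) := by
  nlinarith [sin_sq_add_cos_sq β, cos_le_one β, neg_one_le_cos β]

theorem one_sub_cos_le_sin_sq {β : ℝ} (hβ : 0 ≤ cos β) : 1 - cos β ≤ sin β ^ 2 := by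
  nlinarith [sin_sq_add_cos_sq β, cos_le_one β]

theorem sq_div_five_le_one_sub_cos {β : ℝ} (hβ : |β| ≤ π) : β ^ 2 / 5 ≤ 1 - cos β := by
  have h := cos_le_one_sub_mul_cos_sq hβ
  have : (1 : ℝ) / 5 ≤ 2 / π ^ 2 := by
    rw [div_le_div_iff₀ (by norm_num) (by positivity)]
    nlinarith [pi_lt_d2, pi_pos]
  nlinarith [sq_nonneg β]

theorem half_le_cos_of_abs_le {β : ℝ} (hβ : |β| ≤ 1 / 2) : 1 / 2 ≤ cos β := by
  nlinarith [one_sub_sq_div_two_le_cos (x := β), sq_abs β, abs_nonneg β]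

/-- The cross term `-ε x sin β` makes the decrease strict in `x` as well as in `β`. -/
noncomputable def formationLyapunov (k ε x β : ℝ) : ℝ :=
  k / 2 * x ^ 2 + (1 - cos β) - ε * x * sin β

section Lyapunov

variable {v μ k ε x β : ℝ}

theorem formationLyapunov_le (hε : 0 ≤ ε) (hε2 : ε ≤ 1 / 2) :
    formationLyapunov k ε x β ≤ (k / 2 + 1 / 4) * x ^ 2 + 3 / 2 * (1 - cos β) := by
  unfold formationLyapunov
  nlinarith [sin_sq_le_two_mul_one_sub_cos β, mul_nonneg hε (sq_nonneg (x + sin β)),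
    mul_nonneg (sub_nonneg.2 hε2) (sq_nonneg (x + sin β))]

theorem le_formationLyapunov (hε : 0 ≤ ε) (hεk : ε ≤ k / 2) (hε2 : ε ≤ 1 / 2) :
    k / 4 * x ^ 2 + (1 - cos β) / 2 ≤ formationLyapunov k ε x β := by
  unfold formationLyapunov
  nlinarith [sin_sq_le_two_mul_one_sub_cos β, mul_nonneg hε (sq_nonneg (x - sin β)),
    mul_nonneg (sub_nonneg.2 hεk) (sq_nonneg x), mul_nonneg (sub_nonneg.2 hε2) (sq_nonneg (sin β))]

theorem formationLyapunov_le_mul_abs_add_abs (hk : 0 ≤ k) (hε : 0 ≤ ε) (hε2 : ε ≤ 1 / 2)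
    (h1 : |x| + |β| ≤ 1) : formationLyapunov k ε x β ≤ (k / 2 + 1) * (|x| + |β|) := by
  have hcos : 1 - cos β ≤ β ^ 2 / 2 := by linarith [one_sub_sq_div_two_le_cos (x := β)]
  have hsq : x ^ 2 + β ^ 2 ≤ |x| + |β| := by
    nlinarith [sq_abs x, sq_abs β, abs_nonneg x, abs_nonneg β]
  nlinarith [formationLyapunov_le (k := k) (x := x) (β := β) hε hε2, sq_nonneg x, sq_nonneg β]

theorem abs_lt_of_formationLyapunov_lt {r : ℝ} (hk : 0 < k) (hε : 0 ≤ ε) (hεk : ε ≤ k / 2)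
    (hε2 : ε ≤ 1 / 2) (hr : 0 ≤ r) (hβ : |β| ≤ 1 / 2)
    (hV : formationLyapunov k ε x β < min (k * r ^ 2 / 4) (1 / 40)) : |x| < r ∧ |β| < 1 / 2 := by
  have hlow := le_formationLyapunov (x := x) (β := β) hε hεk hε2
  have hcos := sq_div_five_le_one_sub_cos (hβ.trans (by linarith [pi_gt_three]))
  have h1 := min_le_left (k * r ^ 2 / 4) (1 / 40)
  have h2 := min_le_right (k * r ^ 2 / 4) (1 / 40)
  have hcos1 := cos_le_one β
  constructor
  · refine abs_lt_of_sq_lt_sq ?_ hr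
    nlinarith [sq_nonneg x]
  · refine abs_lt_of_sq_lt_sq ?_ (by norm_num)
    nlinarith [sq_nonneg x]

theorem hasDerivAt_formationLyapunov {X B : ℝ → ℝ} {x' β' t : ℝ} (hX : HasDerivAt X x' t)
    (hB : HasDerivAt B β' t) :
    HasDerivAt (fun s => formationLyapunov k ε (X s) (B s))
      ((k * X t - ε * sin (B t)) * x' + (sin (B t) - ε * X t * cos (B t)) * β') t := by
  refine ((((hX.pow 2).const_mul (k / 2)).add ((hasDerivAt_const t 1).sub hB.cos)).sub
    ((hX.const_mul ε).mul hB.sin)).congr_deriv ?_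
  push_cast
  ring

theorem half_mul_sq_le_mul_of_abs_sub_mul_le {η F : ℝ} (hF : |F - k * x| ≤ η * |x|)
    (hηk : η ≤ k / 2) : k / 2 * x ^ 2 ≤ x * F := by
  have hlin : |x * (F - k * x)| ≤ η * x ^ 2 := by
    rw [abs_mul, ← sq_abs x, sq]
    nlinarith [abs_nonneg x]
  nlinarith [neg_abs_le (x * (F - k * x)), sq_nonneg x]

theorem formationLyapunov_orbitalDeriv_le {η u F : ℝ} (hv : 0 < v) (hμ : 0 < μ) (hε : 0 < ε)
    (hεv : 4 * (ε * v) ≤ μ) (hεμ : 32 * (ε * μ) ≤ v * k) (hε2 : ε ≤ 1 / 2) (hη : 0 ≤ η)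
    (hηk : η ≤ k / 2) (hηε : v * η ≤ ε * μ) (hcos : 1 / 2 ≤ cos β) (hx : |x| ≤ 1)
    (hF : |F - k * x| ≤ η * |x|) :
    (k * x - ε * sin β) * -(v * sin β) + (sin β - ε * x * cos β) * (-u - μ * sin β + v * F)
      ≤ -(ε * v * k / 8) * x ^ 2 - μ / 2 * sin β ^ 2 + 2 * |u| := by
  set s := sin β
  set c := cos β
  have hs : |s| ≤ 1 := abs_sin_le_one β
  have hc : |c| ≤ 1 := abs_cos_le_one β
  have hxF := half_mul_sq_le_mul_of_abs_sub_mul_le hF hηk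
  have hcross : v * (s * (F - k * x)) + ε * μ * (x * s * c) ≤ 2 * (ε * μ) * (|x| * |s|) := by
    have h1 : s * (F - k * x) ≤ η * (|x| * |s|) := by
      calc s * (F - k * x) ≤ |s| * |F - k * x| := (le_abs_self _).trans (abs_mul _ _).le
        _ ≤ |s| * (η * |x|) := by gcongr
        _ = η * (|x| * |s|) := by ring
    have h2 : x * s * c ≤ |x| * |s| := by
      calc x * s * c ≤ |x| * |s| * |c| := (le_abs_self _).trans (by rw [abs_mul, abs_mul])
        _ ≤ |x| * |s| := mul_le_of_le_one_right (by positivity) hc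
    nlinarith [mul_le_mul_of_nonneg_left h1 hv.le, mul_le_mul_of_nonneg_left h2 (mul_pos hε hμ).le,
      mul_le_mul_of_nonneg_right hηε (mul_nonneg (abs_nonneg x) (abs_nonneg s))]
  -- Young's inequality; this is where `32 ε μ ≤ v k` enters
  have hyoung : 2 * (ε * μ) * (|x| * |s|) ≤ ε * v * k / 8 * x ^ 2 + μ / 4 * s ^ 2 := by
    rw [← sq_abs x, ← sq_abs s]
    nlinarith [mul_nonneg hμ.le (sq_nonneg (|s| - 4 * ε * |x|)),
      mul_nonneg (mul_nonneg hε.le (sub_nonneg.2 hεμ)) (sq_nonneg |x|)]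
  have hinput : -(u * s) + ε * u * x * c ≤ 2 * |u| := by
    have hxc : |ε * x * c| ≤ 1 := by
      rw [abs_mul, abs_mul, abs_of_pos hε]
      nlinarith [abs_nonneg x, abs_nonneg c, mul_le_mul hx hc (abs_nonneg c) zero_le_one]
    calc -(u * s) + ε * u * x * c = u * (ε * x * c - s) := by ring
      _ ≤ |u| * (|ε * x * c| + |s|) := (le_abs_self _).trans
          (by rw [abs_mul]; gcongr; exact abs_sub _ _)
      _ ≤ 2 * |u| := by nlinarith [mul_le_mul_of_nonneg_left (add_le_add hxc hs) (abs_nonneg u)]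
  have hcxF : ε * v * k / 4 * x ^ 2 ≤ ε * v * (c * (x * F)) := by
    have hxF0 : 0 ≤ x * F := le_trans (by nlinarith [sq_nonneg x]) hxF
    have : k / 4 * x ^ 2 ≤ c * (x * F) := by nlinarith [mul_le_mul_of_nonneg_right hcos hxF0]
    nlinarith [mul_pos hε hv]
  have hexpand : (k * x - ε * s) * -(v * s) + (s - ε * x * c) * (-u - μ * s + v * F)
      = v * (s * (F - k * x)) + ε * μ * (x * s * c) + (-(u * s) + ε * u * x * c)
        - ε * v * (c * (x * F)) - μ * s ^ 2 + ε * v * s ^ 2 := by ring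
  linarith [mul_le_mul_of_nonneg_right hεv (sq_nonneg s)]

theorem exists_iss_formationLyapunov (hv : 0 < v) (hμ : 0 < μ) (hk : 0 < k) :
    ∃ ε η c : ℝ, 0 < η ∧ 0 < c ∧ 0 ≤ ε ∧ ε ≤ k / 2 ∧ ε ≤ 1 / 2 ∧
      ∀ u x β F, 1 / 2 ≤ cos β → |x| ≤ 1 → |F - k * x| ≤ η * |x| →
        (k * x - ε * sin β) * -(v * sin β) + (sin β - ε * x * cos β) * (-u - μ * sin β + v * F)
          ≤ -c * formationLyapunov k ε x β + 2 * |u| := by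
  obtain ⟨ε, hε, hεv, hεμ, hε2, hεk⟩ : ∃ ε : ℝ, 0 < ε ∧ ε ≤ μ / (4 * v) ∧ ε ≤ v * k / (32 * μ) ∧
      ε ≤ 1 / 2 ∧ ε ≤ k / 2 :=
    ⟨min (min (μ / (4 * v)) (v * k / (32 * μ))) (min (1 / 2) (k / 2)), by positivity,
      min_le_of_left_le (min_le_left _ _), min_le_of_left_le (min_le_right _ _),
      min_le_of_right_le (min_le_left _ _), min_le_of_right_le (min_le_right _ _)⟩
  rw [le_div_iff₀ (by positivity)] at hεv hεμ
  obtain ⟨η, hη, hηk, hηε⟩ : ∃ η : ℝ, 0 < η ∧ η ≤ k / 2 ∧ η ≤ ε * μ / v :=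
    ⟨min (k / 2) (ε * μ / v), by positivity, min_le_left _ _, min_le_right _ _⟩
  rw [le_div_iff₀ hv] at hηε
  obtain ⟨c, hc, hck, hcμ⟩ : ∃ c : ℝ, 0 < c ∧ c ≤ ε * v * k / (4 * k + 2) ∧ c ≤ μ / 3 :=
    ⟨min (ε * v * k / (4 * k + 2)) (μ / 3), by positivity, min_le_left _ _, min_le_right _ _⟩
  rw [le_div_iff₀ (by positivity)] at hck
  refine ⟨ε, η, c, hη, hc, hε.le, hεk, hε2, fun u x β F hcos hx hF => ?_⟩
  have hD := formationLyapunov_orbitalDeriv_le (u := u) hv hμ hε (by linarith) (by linarith) hε2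
    hη.le hηk (by linarith) hcos hx hF
  have hs := one_sub_cos_le_sin_sq (hcos.trans' (by norm_num))
  have hV := mul_le_mul_of_nonneg_left
    (formationLyapunov_le (k := k) (x := x) (β := β) hε.le hε2) hc.le
  nlinarith [mul_le_mul_of_nonneg_right hck (sq_nonneg x), sq_nonneg x, cos_le_one β]

theorem formationLyapunov_nonneg (hk : 0 ≤ k) (hε : 0 ≤ ε) (hεk : ε ≤ k / 2) (hε2 : ε ≤ 1 / 2) :
    0 ≤ formationLyapunov k ε x β := by
  nlinarith [le_formationLyapunov (x := x) (β := β) hε hεk hε2, cos_le_one β, sq_nonneg x]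

theorem forall_abs_lt_of_hasDerivAt_formationLyapunov {X B D : ℝ → ℝ} {r c L : ℝ} (hk : 0 < k)
    (hε : 0 ≤ ε) (hεk : ε ≤ k / 2) (hε2 : ε ≤ 1 / 2) (hr : 0 ≤ r) (hc : 0 < c)
    (hX : ContinuousOn X (Ici 0)) (hB : ContinuousOn B (Ici 0))
    (hV : ∀ t ≥ 0, HasDerivAt (fun s => formationLyapunov k ε (X s) (B s)) (D t) t)
    (hD : ∀ t ≥ 0, |X t| ≤ r → |B t| ≤ 1 / 2 →
      D t ≤ -c * formationLyapunov k ε (X t) (B t) + L)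
    (h0 : |X 0| < r ∧ |B 0| < 1 / 2)
    (hm : max (formationLyapunov k ε (X 0) (B 0)) (L / c) < min (k * r ^ 2 / 4) (1 / 40)) :
    ∀ t ≥ 0, |X t| < r ∧ |B t| < 1 / 2 := fun t ht =>
  mapsTo_Ici_of_hasDerivAt_le_neg_mul_add (γ := fun t => (X t, B t))
    (U := {p : ℝ × ℝ | |p.1| < r} ∩ {p | |p.2| < 1 / 2})
    (K := {p : ℝ × ℝ | |p.1| ≤ r} ∩ {p | |p.2| ≤ 1 / 2}) hc (hX.prodMk hB)
    ((isOpen_lt (by fun_prop) continuous_const).inter (isOpen_lt (by fun_prop) continuous_const))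
    ((isClosed_le (by fun_prop) continuous_const).inter
      (isClosed_le (by fun_prop) continuous_const))
    (inter_subset_inter (ofPred_subset_ofPred.2 fun _ => le_of_lt)
      (ofPred_subset_ofPred.2 fun _ => le_of_lt))
    h0 hV (fun t ht hK => hD t ht hK.1 hK.2) hm
    (fun t _ hK hVt => abs_lt_of_formationLyapunov_lt hk hε hεk hε2 hr hK.2 hVt) ht

theorem tendsto_zero_of_formationLyapunov_tendsto_zero {X B : ℝ → ℝ} (hk : 0 < k)
    (hε : 0 ≤ ε) (hεk : ε ≤ k / 2) (hε2 : ε ≤ 1 / 2) (hB : ∀ᶠ t in atTop, |B t| ≤ π)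
    (hV : Tendsto (fun t => formationLyapunov k ε (X t) (B t)) atTop (𝓝 0)) :
    Tendsto X atTop (𝓝 0) ∧ Tendsto B atTop (𝓝 0) := by
  have hlow := fun t => le_formationLyapunov (x := X t) (β := B t) hε hεk hε2
  refine ⟨tendsto_zero_of_sq_le_mul (C := 4 / k) hV (Eventually.of_forall fun t => ?_),
    tendsto_zero_of_sq_le_mul (C := 10) hV (hB.mono fun t ht => ?_)⟩
  · rw [div_mul_eq_mul_div, le_div_iff₀ hk]
    nlinarith [hlow t, cos_le_one (B t)]
  · nlinarith [hlow t, sq_div_five_le_one_sub_cos ht, sq_nonneg (X t)]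

end Lyapunov

theorem exists_tendsto_zero_of_small_input {v μ k : ℝ} {φ : ℝ → ℝ} (hv : 0 < v)
    (hμ : 0 < μ) (hk : 0 < k) (hφ : HasDerivAt φ k 0) (hφ0 : φ 0 = 0) :
    ∃ δ > 0, ∀ u : ℝ → ℝ, (∃ b, b < δ ∧ ∀ t, 0 ≤ t → |u t| ≤ b) → Tendsto u atTop (𝓝 0) →
      ∀ X B : ℝ → ℝ, (∀ t ≥ 0, HasDerivAt X (-(v * sin (B t))) t) →
        (∀ t ≥ 0, HasDerivAt B (-u t - μ * sin (B t) + v * φ (X t)) t) →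
        |X 0| + |B 0| < δ → Tendsto X atTop (𝓝 0) ∧ Tendsto B atTop (𝓝 0) := by
  obtain ⟨ε, η, c, hη, hc, hε, hεk, hε2, hdiss⟩ := exists_iss_formationLyapunov hv hμ hk
  obtain ⟨r, hr, hr1, hφr⟩ := exists_abs_sub_mul_le_of_hasDerivAt hφ hφ0 hη
  set m := min (k * r ^ 2 / 4) (1 / 40)
  obtain ⟨δ, hδ, hδr, hδ2, hδm, hδc⟩ : ∃ δ > 0, δ ≤ r ∧ δ ≤ 1 / 2 ∧ δ ≤ m / (k / 2 + 1) ∧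
      δ ≤ c * m / 2 :=
    ⟨min (min r (1 / 2)) (min (m / (k / 2 + 1)) (c * m / 2)), by positivity,
      min_le_of_left_le (min_le_left _ _), min_le_of_left_le (min_le_right _ _),
      min_le_of_right_le (min_le_left _ _), min_le_of_right_le (min_le_right _ _)⟩
  rw [le_div_iff₀ (by positivity)] at hδm
  refine ⟨δ, hδ, ?_⟩
  rintro u ⟨b, hbδ, hub⟩ hu X B hX hB h0
  set P := fun t => formationLyapunov k ε (X t) (B t)
  have hP := fun t ht => hasDerivAt_formationLyapunov (k := k) (ε := ε) (hX t ht) (hB t ht)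
  have hdissP : ∀ t ≥ 0, |X t| ≤ r → |B t| ≤ 1 / 2 → _ ≤ -c * P t + 2 * |u t| :=
    fun t _ hXr hBr => hdiss _ _ _ _ (half_le_cos_of_abs_le hBr) (hXr.trans hr1) (hφr _ hXr)
  have hP0 : P 0 < m := by
    calc P 0 ≤ (k / 2 + 1) * (|X 0| + |B 0|) :=
          formationLyapunov_le_mul_abs_add_abs hk.le hε hε2 (by linarith)
      _ < (k / 2 + 1) * δ := by gcongr
      _ ≤ m := by linarith
  have hinv : ∀ t ≥ 0, |X t| < r ∧ |B t| < 1 / 2 :=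
    forall_abs_lt_of_hasDerivAt_formationLyapunov (L := 2 * b) hk hε hεk hε2 hr.le hc
      (fun t ht => (hX t ht).continuousAt.continuousWithinAt)
      (fun t ht => (hB t ht).continuousAt.continuousWithinAt) hP
      (fun t ht hXr hBr => (hdissP t ht hXr hBr).trans (by linarith [hub t ht]))
      ⟨by linarith [abs_nonneg (B 0)], by linarith [abs_nonneg (X 0)]⟩
      (max_lt hP0 (by rw [div_lt_iff₀ hc]; linarith))
  have hPlim : Tendsto P atTop (𝓝 0) :=
    tendsto_zero_of_hasDerivAt_le_neg_mul_add hc hP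
      (fun t ht => hdissP t ht (hinv t ht).1.le (hinv t ht).2.le)
      (by simpa using hu.abs.const_mul 2) fun t _ => formationLyapunov_nonneg hk.le hε hεk hε2
  refine tendsto_zero_of_formationLyapunov_tendsto_zero hk hε hεk hε2 ?_ hPlim
  filter_upwards [eventually_ge_atTop 0] with t ht
  linarith [(hinv t ht).2, pi_gt_three]

theorem perturbed_convergence_vanishing_input_general
    (v₁ μ₁ ρ₀ : ℝ) (hv₁ : 0 < v₁) (hμ₁ : 0 < μ₁) (hρ₀ : 0 < ρ₀)
    (g f : ℝ → ℝ)
    (hg0 : g ρ₀ = 0)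
    (hgpos : ∀ x ∈ Set.Ioi (0 : ℝ), x ≠ ρ₀ → 0 < g x)
    (hf : ∀ x ∈ Set.Ioi (0 : ℝ), HasDerivAt g (f x) x)
    (hf' : ∀ x ∈ Set.Ioi (0 : ℝ), HasDerivAt f (deriv f x) x)
    (hf'ρ₀ : 0 < deriv f ρ₀) :
    ∃ δ > (0 : ℝ),
      ∀ u₁ : ℝ → ℝ, Continuous u₁ →
        (∃ b : ℝ, b < δ ∧ ∀ t : ℝ, 0 ≤ t → |u₁ t| ≤ b) →
        Filter.Tendsto u₁ Filter.atTop (nhds 0) →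
        ∀ ρ α₁ : ℝ → ℝ,
          (∀ t : ℝ, 0 ≤ t → ρ t ∈ Set.Ioi (0 : ℝ)) →
          (∀ t : ℝ, 0 ≤ t → HasDerivAt ρ (-(v₁ * Real.cos (α₁ t))) t) →
          (∀ t : ℝ, 0 ≤ t →
            HasDerivAt α₁ (-(u₁ t) - μ₁ * Real.cos (α₁ t) + v₁ * f (ρ t)) t) →
          |ρ 0 - ρ₀| + |α₁ 0 + π / 2| < δ →
          Filter.Tendsto ρ Filter.atTop (nhds ρ₀) ∧
            Filter.Tendsto α₁ Filter.atTop (nhds (-(π / 2))) := by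
  have hfρ₀ : f ρ₀ = 0 := by
    refine IsLocalMin.hasDerivAt_eq_zero ?_ (hf ρ₀ hρ₀)
    filter_upwards [Ioi_mem_nhds hρ₀] with y hy
    rcases eq_or_ne y ρ₀ with rfl | hne
    · exact le_rfl
    · exact hg0 ▸ (hgpos y hy hne).le
  have hφ : HasDerivAt (fun x => f (ρ₀ + x)) (deriv f ρ₀) 0 :=
    HasDerivAt.comp_const_add ρ₀ 0 (by simpa using hf' ρ₀ hρ₀)
  obtain ⟨δ, hδ, hconv⟩ :=
    exists_tendsto_zero_of_small_input hv₁ hμ₁ hf'ρ₀ hφ (by simpa using hfρ₀)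
  refine ⟨δ, hδ, fun u₁ _ hb hu ρ α₁ _ hρ hα₁ h0 => ?_⟩
  have hlim := hconv u₁ hb hu (fun t => ρ t - ρ₀) (fun t => α₁ t + π / 2)
    (fun t ht => by simpa [sin_add_pi_div_two] using (hρ t ht).sub_const ρ₀)
    (fun t ht => by simpa [sin_add_pi_div_two] using (hα₁ t ht).add_const (π / 2)) h0
  exact ⟨by simpa using hlim.1.add_const ρ₀, by simpa using hlim.2.sub_const (π / 2)⟩

/-- If the leader's steering perturbation is small and vanishes asymptotically,
solutions of the perturbed reduced shape dynamics starting near the equilibrium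
converge to the abreast formation `(ρ₀, -π/2)`. -/
theorem perturbed_convergence_vanishing_input
    (v₁ μ₁ ρ₀ : ℝ) (hv₁ : 0 < v₁) (hμ₁ : 0 < μ₁) (hρ₀ : 0 < ρ₀)
    (g f : ℝ → ℝ)
    (hg : ContDiffOn ℝ 2 g (Set.Ioi 0))
    (hg0 : g ρ₀ = 0)
    (hgpos : ∀ x ∈ Set.Ioi (0 : ℝ), x ≠ ρ₀ → 0 < g x)
    (hglim0 : Filter.Tendsto g (nhdsWithin 0 (Set.Ioi 0)) Filter.atTop)
    (hglimtop : Filter.Tendsto g Filter.atTop Filter.atTop)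
    (hf : ∀ x ∈ Set.Ioi (0 : ℝ), HasDerivAt g (f x) x)
    (hf' : ∀ x ∈ Set.Ioi (0 : ℝ), HasDerivAt f (deriv f x) x)
    (hf'ρ₀ : 0 < deriv f ρ₀) :
    ∃ δ > (0 : ℝ),
      ∀ u₁ : ℝ → ℝ, Continuous u₁ →
        (∃ b : ℝ, b < δ ∧ ∀ t : ℝ, 0 ≤ t → |u₁ t| ≤ b) →
        Filter.Tendsto u₁ Filter.atTop (nhds 0) →
        ∀ ρ α₁ : ℝ → ℝ,
          (∀ t : ℝ, 0 ≤ t → ρ t ∈ Set.Ioi (0 : ℝ)) →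
          (∀ t : ℝ, 0 ≤ t → HasDerivAt ρ (-(v₁ * Real.cos (α₁ t))) t) →
          (∀ t : ℝ, 0 ≤ t →
            HasDerivAt α₁ (-(u₁ t) - μ₁ * Real.cos (α₁ t) + v₁ * f (ρ t)) t) →
          |ρ 0 - ρ₀| + |α₁ 0 + π / 2| < δ →
          Filter.Tendsto ρ Filter.atTop (nhds ρ₀) ∧
            Filter.Tendsto α₁ Filter.atTop (nhds (-(π / 2))) :=
  perturbed_convergence_vanishing_input_general v₁ μ₁ ρ₀ hv₁ hμ₁ hρ₀ g f hg0 hgpos hf hf' hf'ρ₀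
end

section
/- (Proposition 3, convergence to the periodic orbit) Under the hypotheses of the existence statement (v₁ > 0, μ₁ > 0, ρ₀ > 0, T > 0, g C² with g(ρ₀) = 0, g > 0 away from ρ₀, g → ∞ at 0⁺ and ∞, f = g' C¹, f'(ρ₀) > 0, u₁ continuous T-periodic with sup_t |u₁(t)| < k_u* for k_u* sufficiently small), the T-periodic solution (ρ̃, α̃₁) of ρ' = -v₁ cos α₁, α₁' = -u₁(t) - μ₁ cos α₁ + v₁ f(ρ) is exponentially stable: there exist δ > 0, C ≥ 1, λ > 0 such that every solution (ρ, α₁) with ‖(ρ(0) - ρ̃(0), α₁(0) - α̃₁(0))‖ < δ satisfies ‖(ρ(t) - ρ̃(t), α₁(t) - α̃₁(t))‖ ≤ C·e^{-λ t}·‖(ρ(0) - ρ̃(0), α₁(0) - α̃₁(0))‖ for all t ≥ 0; in particular such solutions asymptotically converge to the T-periodic orbit. -/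
open Real Set

/-!
The error `(X, Y) = (ρ - ρ̃, α₁ - α̃₁)` between two solutions obeys dynamics in which the
steering `u₁` cancels. Near the equilibrium `(ρ₀, -π/2)` these are, up to an error of size
`τ ‖(X, Y)‖` with `τ` as small as we like (strict differentiability of `cos` at `-π/2` and of `f`
at `ρ₀`), the linear system `X' = -v₁ Y`, `Y' = v₁ a X - μ₁ Y` with `a = f'(ρ₀) > 0`, whose matrix
is Hurwitz. For small `η > 0` the quadratic form `a X² + Y² - η X Y` is comparable to
`‖(X, Y)‖²` and its derivative along the perturbed system is at most `-c ‖(X, Y)‖²`. Hence a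
solution starting close enough never leaves the region where this estimate holds, and the form
decays exponentially.
-/

theorem HasStrictDerivAt.exists_abs_sub_sub_mul_le {f : ℝ → ℝ} {f' x₀ σ : ℝ}
    (hf : HasStrictDerivAt f f' x₀) (hσ : 0 < σ) :
    ∃ r > 0, ∀ x y, |x - x₀| < r → |y - x₀| < r →
      |f x - f y - f' * (x - y)| ≤ σ * |x - y| := by
  obtain ⟨r, hr, hball⟩ := Metric.eventually_nhds_iff.1
    ((hasDerivAtFilter_iff_isLittleO.1 hf).def hσ)
  refine ⟨r, hr, fun x y hx hy => ?_⟩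
  have h := @hball (x, y) (by simpa [Prod.dist_eq, Real.dist_eq] using ⟨hx, hy⟩)
  simpa [mul_comm f'] using h

theorem le_mul_exp_of_hasDerivAt_le_neg_mul {V V' : ℝ → ℝ} {k R : ℝ} (hk : 0 < k)
    (hV : ∀ t, 0 ≤ t → HasDerivAt V (V' t) t) (hV₀ : 0 ≤ V 0) (hR : V 0 < R)
    (hdecay : ∀ t, 0 ≤ t → V t < R → V' t ≤ -k * V t) {t : ℝ} (ht : 0 ≤ t) :
    V t ≤ V 0 * exp (-k * t) := by
  refine le_of_forall_pos_le_add fun ε hε => ?_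
  -- The fence `V 0 * exp (-k s) + ε'` with `ε' > 0` makes the boundary inequality strict.
  set ε' := min ε ((R - V 0) / 2)
  have hε' : 0 < ε' := lt_min hε (by linarith)
  have hB : ∀ s, HasDerivAt (fun s => V 0 * exp (-k * s) + ε') (V 0 * (exp (-k * s) * -k)) s :=
    fun s => (((hasDerivAt_id s).const_mul (-k)).exp.const_mul (V 0)).add_const ε' |>.congr_deriv
      (by simp)
  have hfence := image_le_of_deriv_right_lt_deriv_boundary
    (fun s hs => (hV s hs.1).continuousAt.continuousWithinAt)
    (fun s hs => (hV s hs.1).hasDerivWithinAt) (by simpa using hε'.le) hB ?_ ⟨ht, le_rfl⟩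
  · exact hfence.trans (by gcongr; exact min_le_left _ _)
  · intro s hs hVs
    have hexp : exp (-k * s) ≤ 1 := exp_le_one_iff.2 (by nlinarith [hs.1])
    have hVR : V s < R := by
      rw [hVs]; nlinarith [min_le_right ε ((R - V 0) / 2)]
    have hV's := hdecay s hs.1 hVR
    rw [hVs] at hV's
    nlinarith [mul_pos hk hε']

theorem exists_exp_decay_of_lyapunov {E : Type*} [SeminormedAddGroup E] {m M c ε : ℝ}
    (hm : 0 < m) (hmM : m ≤ M) (hc : 0 < c) (hε : 0 < ε) :
    ∃ δ > 0, ∃ C, 1 ≤ C ∧ ∃ lam > 0, ∀ (x : ℝ → E) (V V' : ℝ → ℝ),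
      (∀ t, 0 ≤ t → HasDerivAt V (V' t) t) →
      (∀ t, 0 ≤ t → m * ‖x t‖ ^ 2 ≤ V t ∧ V t ≤ M * ‖x t‖ ^ 2) →
      (∀ t, 0 ≤ t → ‖x t‖ < ε → V' t ≤ -c * ‖x t‖ ^ 2) →
      ‖x 0‖ < δ → ∀ t, 0 ≤ t → ‖x t‖ ≤ C * exp (-lam * t) * ‖x 0‖ := by
  have hM : 0 < M := hm.trans_le hmM
  refine ⟨ε * √(m / M), by positivity, √(M / m), one_le_sqrt.2 ((one_le_div hm).2 hmM),
    c / (2 * M), by positivity, fun x V V' hV hVx hdiss h₀ t ht => ?_⟩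
  have hsmall : ∀ s, 0 ≤ s → V s < m * ε ^ 2 → ‖x s‖ < ε := fun s hs hVs =>
    (pow_lt_pow_iff_left₀ (norm_nonneg _) hε.le two_ne_zero).1
      (lt_of_mul_lt_mul_left ((hVx s hs).1.trans_lt hVs) hm.le)
  have hdecay : ∀ s, 0 ≤ s → V s < m * ε ^ 2 → V' s ≤ -(c / M) * V s := fun s hs hVs => calc
    V' s ≤ -c * ‖x s‖ ^ 2 := hdiss s hs (hsmall s hs hVs)
    _ = -(c / M) * (M * ‖x s‖ ^ 2) := by field_simp
    _ ≤ -(c / M) * V s :=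
      mul_le_mul_of_nonpos_left (hVx s hs).2 (neg_nonpos.2 (by positivity))
  have hV₀ : V 0 < m * ε ^ 2 := calc
    V 0 ≤ M * ‖x 0‖ ^ 2 := (hVx 0 le_rfl).2
    _ < M * (ε * √(m / M)) ^ 2 := by gcongr
    _ = m * ε ^ 2 := by rw [mul_pow, sq_sqrt (by positivity)]; field_simp
  have hVt := le_mul_exp_of_hasDerivAt_le_neg_mul (by positivity) hV
    ((by positivity : 0 ≤ m * ‖x 0‖ ^ 2).trans (hVx 0 le_rfl).1) hV₀ hdecay ht
  refine (pow_le_pow_iff_left₀ (norm_nonneg _) (by positivity) two_ne_zero).1 ?_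
  rw [← mul_le_mul_iff_of_pos_left hm]
  calc m * ‖x t‖ ^ 2 ≤ V t := (hVx t ht).1
    _ ≤ M * ‖x 0‖ ^ 2 * exp (-(c / M) * t) := hVt.trans (by gcongr; exact (hVx 0 le_rfl).2)
    _ = m * (√(M / m) * exp (-(c / (2 * M)) * t) * ‖x 0‖) ^ 2 := by
      rw [mul_pow, mul_pow, sq_sqrt (by positivity), ← exp_nat_mul]
      field_simp
      ring_nf

theorem Prod.abs_fst_mul_snd_le_sq_norm (z : ℝ × ℝ) : |z.1 * z.2| ≤ ‖z‖ ^ 2 := by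
  rw [abs_mul, sq]
  exact mul_le_mul (norm_fst_le z) (norm_snd_le z) (abs_nonneg _) (norm_nonneg z)

theorem Prod.min_mul_sq_norm_le {p q : ℝ} (hp : 0 ≤ p) (hq : 0 ≤ q) (z : ℝ × ℝ) :
    min p q * ‖z‖ ^ 2 ≤ p * z.1 ^ 2 + q * z.2 ^ 2 := by
  have hz : ‖z‖ ^ 2 ≤ z.1 ^ 2 + z.2 ^ 2 := by
    rw [Prod.norm_def, Real.norm_eq_abs, Real.norm_eq_abs]
    rcases max_cases |z.1| |z.2| with ⟨h, -⟩ | ⟨h, -⟩ <;> rw [h, sq_abs] <;>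
      nlinarith [sq_nonneg z.1, sq_nonneg z.2]
  nlinarith [mul_le_mul_of_nonneg_left hz (le_min hp hq), min_le_left p q, min_le_right p q,
    sq_nonneg z.1, sq_nonneg z.2]

def lyapunovForm (a η : ℝ) (z : ℝ × ℝ) : ℝ := a * z.1 ^ 2 + z.2 ^ 2 - η * (z.1 * z.2)

section lyapunovForm

variable {v μ a η : ℝ}

theorem le_lyapunovForm (ha : 0 ≤ a) (hη : 0 ≤ η) (z : ℝ × ℝ) :
    (min 1 a - η) * ‖z‖ ^ 2 ≤ lyapunovForm a η z := by
  have hquad := Prod.min_mul_sq_norm_le ha zero_le_one z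
  rw [min_comm] at hquad
  have hprod := (le_abs_self _).trans (Prod.abs_fst_mul_snd_le_sq_norm z)
  unfold lyapunovForm
  nlinarith [mul_le_mul_of_nonneg_left hprod hη]

theorem lyapunovForm_le (ha : 0 ≤ a) (hη : 0 ≤ η) (z : ℝ × ℝ) :
    lyapunovForm a η z ≤ (a + 1 + η) * ‖z‖ ^ 2 := by
  have hsq₁ : z.1 ^ 2 ≤ ‖z‖ ^ 2 := by
    rw [← sq_abs]; exact pow_le_pow_left₀ (abs_nonneg _) (norm_fst_le z) 2
  have hsq₂ : z.2 ^ 2 ≤ ‖z‖ ^ 2 := by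
    rw [← sq_abs]; exact pow_le_pow_left₀ (abs_nonneg _) (norm_snd_le z) 2
  have hprod := (neg_le_abs _).trans (Prod.abs_fst_mul_snd_le_sq_norm z)
  unfold lyapunovForm
  nlinarith [mul_le_mul_of_nonneg_left hsq₁ ha, mul_le_mul_of_nonneg_left hprod hη]

theorem hasDerivAt_lyapunovForm {X Y : ℝ → ℝ} {X' Y' t : ℝ} (hX : HasDerivAt X X' t)
    (hY : HasDerivAt Y Y' t) :
    HasDerivAt (fun s => lyapunovForm a η (X s, Y s))
      ((2 * a * X t - η * Y t) * X' + (2 * Y t - η * X t) * Y') t := by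
  unfold lyapunovForm
  exact (((hX.pow 2).const_mul a).add (hY.pow 2) |>.sub ((hX.mul hY).const_mul η)).congr_deriv
    (by simp; ring)

theorem lyapunovForm_linear_dissipation (hv : 0 < v) (hμ : 0 < μ) (ha : 0 < a) (hη : 0 ≤ η)
    (hηv : η * (2 * v ^ 2 * a + μ ^ 2) ≤ 2 * v * a * μ) (X Y : ℝ) :
    (2 * a * X - η * Y) * -(v * Y) + (2 * Y - η * X) * (-(μ * Y) + v * (a * X)) ≤
      -(min (η * v * a / 2) μ * ‖(X, Y)‖ ^ 2) := by
  -- `2va` times the margin is `η (vaX - μY)² + (2vaμ - η (2v²a + μ²)) Y²`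
  have hmargin : 0 ≤ η * v * a / 2 * X ^ 2 + (μ - η * v) * Y ^ 2 - η * μ * (X * Y) := by
    refine nonneg_of_mul_nonneg_right ?_ (by positivity : 0 < 2 * v * a)
    nlinarith [mul_nonneg hη (sq_nonneg (v * a * X - μ * Y)),
      mul_nonneg (sub_nonneg.2 hηv) (sq_nonneg Y)]
  have hnorm := Prod.min_mul_sq_norm_le (by positivity : 0 ≤ η * v * a / 2) hμ.le (X, Y)
  dsimp only at hnorm
  nlinarith

theorem lyapunovForm_dissipation (hv : 0 < v) (hμ : 0 < μ) (ha : 0 < a) (hη : 0 ≤ η)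
    (hηv : η * (2 * v ^ 2 * a + μ ^ 2) ≤ 2 * v * a * μ) {X Y p q τ : ℝ}
    (hp : |p - Y| ≤ τ * ‖(X, Y)‖) (hq : |q - a * X| ≤ τ * ‖(X, Y)‖) :
    (2 * a * X - η * Y) * -(v * p) + (2 * Y - η * X) * (-(μ * p) + v * q) ≤
      -((min (η * v * a / 2) μ - ((2 * a + η) * v + (2 + η) * (μ + v)) * τ) *
        ‖(X, Y)‖ ^ 2) := by
  set n := ‖(X, Y)‖
  have hX : |X| ≤ n := norm_fst_le (X, Y)
  have hY : |Y| ≤ n := norm_snd_le (X, Y)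
  have hG₁ : |2 * a * X - η * Y| ≤ (2 * a + η) * n := calc
    _ ≤ |2 * a * X| + |η * Y| := abs_sub _ _
    _ = 2 * a * |X| + η * |Y| := by simp only [abs_mul, abs_two, abs_of_pos ha, abs_of_nonneg hη]
    _ ≤ (2 * a + η) * n := by nlinarith
  have hG₂ : |2 * Y - η * X| ≤ (2 + η) * n := calc
    _ ≤ |2 * Y| + |η * X| := abs_sub _ _
    _ = 2 * |Y| + η * |X| := by simp only [abs_mul, abs_two, abs_of_nonneg hη]
    _ ≤ (2 + η) * n := by nlinarith
  have hd₁ : |-(v * (p - Y))| ≤ v * (τ * n) := by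
    rw [abs_neg, abs_mul, abs_of_pos hv]; gcongr
  have hd₂ : |-(μ * (p - Y)) + v * (q - a * X)| ≤ (μ + v) * (τ * n) := calc
    _ ≤ |-(μ * (p - Y))| + |v * (q - a * X)| := abs_add_le _ _
    _ = μ * |p - Y| + v * |q - a * X| := by
      rw [abs_neg, abs_mul, abs_mul, abs_of_pos hμ, abs_of_pos hv]
    _ ≤ (μ + v) * (τ * n) := by nlinarith
  have hpert : (2 * a * X - η * Y) * -(v * (p - Y)) +
      (2 * Y - η * X) * (-(μ * (p - Y)) + v * (q - a * X)) ≤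
      ((2 * a + η) * v + (2 + η) * (μ + v)) * τ * n ^ 2 := calc
    _ ≤ |2 * a * X - η * Y| * |-(v * (p - Y))| +
        |2 * Y - η * X| * |-(μ * (p - Y)) + v * (q - a * X)| := by
      rw [← abs_mul, ← abs_mul]; exact (le_abs_self _).trans (abs_add_le _ _)
    _ ≤ (2 * a + η) * n * (v * (τ * n)) + (2 + η) * n * ((μ + v) * (τ * n)) := by
      gcongr
    _ = ((2 * a + η) * v + (2 + η) * (μ + v)) * τ * n ^ 2 := by ring
  have hlin := lyapunovForm_linear_dissipation hv hμ ha hη hηv X Y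
  linear_combination hlin + hpert

theorem exists_lyapunovForm_dissipation (hv : 0 < v) (hμ : 0 < μ) (ha : 0 < a) :
    ∃ η c τ : ℝ, 0 < η ∧ η < min 1 a ∧ 0 < c ∧ 0 < τ ∧ ∀ X Y p q : ℝ,
      |p - Y| ≤ τ * ‖(X, Y)‖ → |q - a * X| ≤ τ * ‖(X, Y)‖ →
      (2 * a * X - η * Y) * -(v * p) + (2 * Y - η * X) * (-(μ * p) + v * q) ≤
        -c * ‖(X, Y)‖ ^ 2 := by
  set η := min (min 1 a / 2) (2 * v * a * μ / (2 * v ^ 2 * a + μ ^ 2))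
  have hη : 0 < η := by positivity
  have hηa : η < min 1 a := (min_le_left _ _).trans_lt (half_lt_self (lt_min one_pos ha))
  have hηv : η * (2 * v ^ 2 * a + μ ^ 2) ≤ 2 * v * a * μ :=
    (le_div_iff₀ (by positivity)).1 (min_le_right _ _)
  set c := min (η * v * a / 2) μ
  set K := (2 * a + η) * v + (2 + η) * (μ + v)
  refine ⟨η, c / 2, c / (2 * K), hη, hηa, by positivity, by positivity, fun X Y p q hp hq => ?_⟩
  have hK : K * (c / (2 * K)) = c / 2 := by
    field_simp [show K ≠ 0 by positivity]
  refine (lyapunovForm_dissipation hv hμ ha hη.le hηv hp hq).trans_eq ?_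
  rw [hK]
  ring

end lyapunovForm

theorem exists_shape_error_near_linear {f : ℝ → ℝ} {a ρ₀ τ : ℝ}
    (hf : HasStrictDerivAt f a ρ₀) (hτ : 0 < τ) :
    ∃ ε > 0, ∀ ρ ρ' α α' : ℝ, ‖(ρ' - ρ₀, α' + π / 2)‖ < ε → ‖(ρ - ρ', α - α')‖ < ε →
      |cos α - cos α' - (α - α')| ≤ τ * ‖(ρ - ρ', α - α')‖ ∧
      |f ρ - f ρ' - a * (ρ - ρ')| ≤ τ * ‖(ρ - ρ', α - α')‖ := by
  have hcos : HasStrictDerivAt cos 1 (-(π / 2)) := (hasStrictDerivAt_cos _).congr_deriv (by simp)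
  obtain ⟨r₁, hr₁, hf_lin⟩ := hf.exists_abs_sub_sub_mul_le hτ
  obtain ⟨r₂, hr₂, hcos_lin⟩ := hcos.exists_abs_sub_sub_mul_le hτ
  refine ⟨min r₁ r₂ / 2, by positivity, fun ρ ρ' α α' h' h => ?_⟩
  have hρ' : |ρ' - ρ₀| < min r₁ r₂ / 2 := (norm_fst_le _).trans_lt h'
  have hα' : |α' - -(π / 2)| < min r₁ r₂ / 2 := by
    rw [sub_neg_eq_add]; exact (norm_snd_le _).trans_lt h'
  have hρ : |ρ - ρ'| < min r₁ r₂ / 2 := (norm_fst_le _).trans_lt h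
  have hα : |α - α'| < min r₁ r₂ / 2 := (norm_snd_le _).trans_lt h
  have hr₁ : min r₁ r₂ / 2 + min r₁ r₂ / 2 ≤ r₁ := by linarith [min_le_left r₁ r₂]
  have hr₂ : min r₁ r₂ / 2 + min r₁ r₂ / 2 ≤ r₂ := by linarith [min_le_right r₁ r₂]
  constructor
  · calc |cos α - cos α' - (α - α')|
        = |cos α - cos α' - 1 * (α - α')| := by rw [one_mul]
      _ ≤ τ * |α - α'| := hcos_lin α α' (by linarith [abs_sub_le α α' (-(π / 2))]) (by linarith)
      _ ≤ τ * ‖(ρ - ρ', α - α')‖ := by gcongr; exact norm_snd_le (ρ - ρ', α - α')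
  · calc |f ρ - f ρ' - a * (ρ - ρ')|
        ≤ τ * |ρ - ρ'| := hf_lin ρ ρ' (by linarith [abs_sub_le ρ ρ' ρ₀]) (by linarith)
      _ ≤ τ * ‖(ρ - ρ', α - α')‖ := by gcongr; exact norm_fst_le (ρ - ρ', α - α')

theorem prop3_periodic_orbit_exponentially_stable_general
    (v₁ μ₁ ρ₀ T : ℝ) (hv₁ : 0 < v₁) (hμ₁ : 0 < μ₁) (hρ₀ : 0 < ρ₀)
    (f : ℝ → ℝ)
    (hf' : ContDiffOn ℝ 1 f (Set.Ioi 0))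
    (hf'ρ₀ : 0 < deriv f ρ₀) :
    ∃ kstar > (0 : ℝ), ∃ ε > (0 : ℝ),
      ∀ u₁ : ℝ → ℝ, Continuous u₁ → (∀ t : ℝ, u₁ (t + T) = u₁ t) →
        (∃ b : ℝ, b < kstar ∧ ∀ t : ℝ, |u₁ t| ≤ b) →
        -- any `T`-periodic solution staying `ε`-close to the equilibrium
        ∀ ρT αT : ℝ → ℝ,
          (∀ t : ℝ, 0 < ρT t) →
          (∀ t : ℝ, HasDerivAt ρT (-(v₁ * Real.cos (αT t))) t) →
          (∀ t : ℝ,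
            HasDerivAt αT (-(u₁ t) - μ₁ * Real.cos (αT t) + v₁ * f (ρT t)) t) →
          (∀ t : ℝ, ρT (t + T) = ρT t) → (∀ t : ℝ, αT (t + T) = αT t) →
          (∀ t : ℝ, ‖(ρT t - ρ₀, αT t + π / 2)‖ < ε) →
          -- is exponentially stable
          ∃ δ > (0 : ℝ), ∃ C : ℝ, 1 ≤ C ∧ ∃ lam > (0 : ℝ),
            ∀ ρ α₁ : ℝ → ℝ,
              (∀ t : ℝ, 0 ≤ t → 0 < ρ t) →
              (∀ t : ℝ, 0 ≤ t → HasDerivAt ρ (-(v₁ * Real.cos (α₁ t))) t) →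
              (∀ t : ℝ, 0 ≤ t → HasDerivAt α₁
                (-(u₁ t) - μ₁ * Real.cos (α₁ t) + v₁ * f (ρ t)) t) →
              ‖(ρ 0 - ρT 0, α₁ 0 - αT 0)‖ < δ →
              ∀ t : ℝ, 0 ≤ t →
                ‖(ρ t - ρT t, α₁ t - αT t)‖ ≤
                  C * Real.exp (-lam * t) * ‖(ρ 0 - ρT 0, α₁ 0 - αT 0)‖ := by
  set a := deriv f ρ₀
  have hfa : HasStrictDerivAt f a ρ₀ :=
    (hf'.contDiffAt (Ioi_mem_nhds hρ₀)).hasStrictDerivAt one_ne_zero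
  obtain ⟨η, c, τ, hη, hηa, hc, hτ, hdiss⟩ := exists_lyapunovForm_dissipation hv₁ hμ₁ hf'ρ₀
  obtain ⟨ε, hε, hlin⟩ := exists_shape_error_near_linear hfa hτ
  refine ⟨1, one_pos, ε, hε, fun u₁ _ _ _ ρT αT _ hρT' hαT' _ _ hnear => ?_⟩
  obtain ⟨δ, hδ, C, hC, lam, hlam, hstab⟩ := exists_exp_decay_of_lyapunov (E := ℝ × ℝ)
    (M := a + 1 + η) (sub_pos.2 hηa) (by linarith [min_le_left 1 a]) hc hε
  refine ⟨δ, hδ, C, hC, lam, hlam, fun ρ α₁ _ hρ' hα₁' => hstab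
    (fun t => (ρ t - ρT t, α₁ t - αT t)) (fun t => lyapunovForm a η (ρ t - ρT t, α₁ t - αT t)) _
    (fun t ht => hasDerivAt_lyapunovForm ((hρ' t ht).sub (hρT' t)) ((hα₁' t ht).sub (hαT' t)))
    (fun t _ => ⟨le_lyapunovForm hf'ρ₀.le hη.le _, lyapunovForm_le hf'ρ₀.le hη.le _⟩)
    fun t _ hsmall => ?_⟩
  obtain ⟨hcos, hf⟩ := hlin _ _ _ _ (hnear t) hsmall
  convert hdiss _ _ _ _ hcos hf using 1
  ring

/-- Proposition 3 (convergence): for sufficiently small continuous `T`-periodic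
leader steering, the `T`-periodic solution of the perturbed reduced shape
dynamics near the equilibrium `(ρ₀, -π/2)` is exponentially stable, so nearby
solutions asymptotically converge to the periodic orbit. -/
theorem prop3_periodic_orbit_exponentially_stable
    (v₁ μ₁ ρ₀ T : ℝ) (hv₁ : 0 < v₁) (hμ₁ : 0 < μ₁) (hρ₀ : 0 < ρ₀) (hT : 0 < T)
    (g f : ℝ → ℝ)
    (hg : ContDiffOn ℝ 2 g (Set.Ioi 0))
    (hg0 : g ρ₀ = 0)
    (hgpos : ∀ x ∈ Set.Ioi (0 : ℝ), x ≠ ρ₀ → 0 < g x)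
    (hglim0 : Filter.Tendsto g (nhdsWithin 0 (Set.Ioi 0)) Filter.atTop)
    (hglimtop : Filter.Tendsto g Filter.atTop Filter.atTop)
    (hf : ∀ x ∈ Set.Ioi (0 : ℝ), HasDerivAt g (f x) x)
    (hf' : ContDiffOn ℝ 1 f (Set.Ioi 0))
    (hf'ρ₀ : 0 < deriv f ρ₀) :
    ∃ kstar > (0 : ℝ), ∃ ε > (0 : ℝ),
      ∀ u₁ : ℝ → ℝ, Continuous u₁ → (∀ t : ℝ, u₁ (t + T) = u₁ t) →
        (∃ b : ℝ, b < kstar ∧ ∀ t : ℝ, |u₁ t| ≤ b) →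
        -- any `T`-periodic solution staying `ε`-close to the equilibrium
        ∀ ρT αT : ℝ → ℝ,
          (∀ t : ℝ, 0 < ρT t) →
          (∀ t : ℝ, HasDerivAt ρT (-(v₁ * Real.cos (αT t))) t) →
          (∀ t : ℝ,
            HasDerivAt αT (-(u₁ t) - μ₁ * Real.cos (αT t) + v₁ * f (ρT t)) t) →
          (∀ t : ℝ, ρT (t + T) = ρT t) → (∀ t : ℝ, αT (t + T) = αT t) →
          (∀ t : ℝ, ‖(ρT t - ρ₀, αT t + π / 2)‖ < ε) →
          -- is exponentially stable
          ∃ δ > (0 : ℝ), ∃ C : ℝ, 1 ≤ C ∧ ∃ lam > (0 : ℝ),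
            ∀ ρ α₁ : ℝ → ℝ,
              (∀ t : ℝ, 0 ≤ t → 0 < ρ t) →
              (∀ t : ℝ, 0 ≤ t → HasDerivAt ρ (-(v₁ * Real.cos (α₁ t))) t) →
              (∀ t : ℝ, 0 ≤ t → HasDerivAt α₁
                (-(u₁ t) - μ₁ * Real.cos (α₁ t) + v₁ * f (ρ t)) t) →
              ‖(ρ 0 - ρT 0, α₁ 0 - αT 0)‖ < δ →
              ∀ t : ℝ, 0 ≤ t →
                ‖(ρ t - ρT t, α₁ t - αT t)‖ ≤
                  C * Real.exp (-lam * t) * ‖(ρ 0 - ρT 0, α₁ 0 - αT 0)‖ :=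
  prop3_periodic_orbit_exponentially_stable_general v₁ μ₁ ρ₀ T hv₁ hμ₁ hρ₀ f hf' hf'ρ₀
end
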